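/- arXiv:2010.10824 — 7 statements merged into one kernel-verified Lean document; each statement's English description precedes it below -/
import Mathlib

section
/- Let m ∈ ℕ, Π ⊆ ℝ[x_1,…,x_m] be a polynomial subspace, P ⊆ ℝ^m a finite non-empty set, H = Q_H^{-1}(0) a hyperplane defined by Q_H ∈ Π_{m,1,1} \ {0} such that every affine transformation mapping H to ℝ^{m−1}×{0} is canonical with respect to Π, and suppose P is unisolvent with respect to (Π, H). Let f : ℝ^m → ℝ be a function and suppose Q_1 ∈ Π_{|H} and Q_2 ∈ Π_{|H̄} satisfy (i) Q_1(p) = f(p) for all p ∈ P ∩ H and (ii) Q_2(p) = (f(p) − Q_1(p))/Q_H(p) for all p ∈ P \ H. Then Q = Q_1 + Q_H·Q_2 ∈ Π, and Q is the unique polynomial in Π interpolating f on P, i.e., Q(p) = f(p) for all p ∈ P. -/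
open MvPolynomial
open scoped Classical

noncomputable section

/-- The pullback `τ^*` of a polynomial along the affine transformation
`τ(x) = B x + b`, i.e. `τ^*(Q)(x) = Q(τ(x))`. -/
def affinePullback {m : ℕ} (B : Matrix (Fin m) (Fin m) ℝ) (b : Fin m → ℝ) :
    MvPolynomial (Fin m) ℝ →ₐ[ℝ] MvPolynomial (Fin m) ℝ :=
  aeval fun i => (∑ j, C (B i j) * X j) + C (b i)

/-!
Existence is immediate; the content is uniqueness. Let `D ∈ Π` vanish on `P` and write
`Q_H(x) = a ⬝ x + c`. For `a ⬝ w = 1` and `t ≠ 0` the stretch `x ↦ x - (1 - t) Q_H(x) w`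
preserves `H`; composing with an affine involution that exchanges `H` and `{x_k = 0}` shows it
is canonical. Its pullback of `D` is polynomial in `t`, so the coefficient at `t = 0`, the
pullback `D ∘ π_w` along the projection `π_w(x) = x - Q_H(x) w`, lies in `Π` too. It agrees
with `D` on `H`, and `Q_H` divides `D - D ∘ π_w`.

Let `u = B e_k`, so that `τ_H^* T` is free of `x_k` exactly when `T` is invariant along `u`.
If `a ⬝ u ≠ 0`, take `w ∥ u`: condition (i) kills `D ∘ π_w`, so `D = Q_H E`, and condition (ii)
kills `E`. If `a ⬝ u = 0`, projecting along `u` shows with (i) that no nonzero element of `Π`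
vanishes on `H`; applied to `D - D ∘ π_w` for all `w`, this makes `D` invariant along `u`, and
(i) applied to `D` itself gives `D = 0`.
-/

open Matrix

theorem MvPolynomial.eval_aeval {σ R : Type*} [CommSemiring R] (x : σ → R)
    (g : σ → MvPolynomial σ R) (Q : MvPolynomial σ R) :
    eval x (aeval g Q) = eval (fun i => eval x (g i)) Q := by
  induction Q using MvPolynomial.induction_on <;> simp_all

theorem MvPolynomial.eq_sum_C_mul_X_add_C_of_totalDegree_le_one {R σ : Type*} [CommSemiring R]
    [Fintype σ] {p : MvPolynomial σ R} (h : p.totalDegree ≤ 1) :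
    p = ∑ i, C (coeff (Finsupp.single i 1) p) * X i + C (coeff 0 p) := by
  have hsupp : p.support ⊆ insert 0 (Finset.univ.image fun i => Finsupp.single i 1) := by
    intro d hd
    rcases Nat.le_one_iff_eq_zero_or_eq_one.mp ((le_totalDegree hd).trans h) with h0 | h1
    · simp [(Finsupp.degree_eq_zero_iff d).mp h0]
    · obtain ⟨i, rfl⟩ := (Finsupp.sum_eq_one_iff d).mp h1
      simp
  conv_lhs => rw [p.as_sum, Finset.sum_subset hsupp fun d _ hd => by
    rw [notMem_support_iff.mp hd, monomial_zero]]
  rw [Finset.sum_insert (by simp), Finset.sum_image fun i _ j _ h =>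
    Finsupp.single_left_injective one_ne_zero h, add_comm]
  simp [monomial_eq]

theorem MvPolynomial.eq_zero_of_mem_support_of_forall_eval_update_eq {R σ : Type*} [CommRing R]
    [IsDomain R] [Infinite R] [DecidableEq σ] {Q : MvPolynomial σ R} {k : σ}
    (h : ∀ (x : σ → R) (r : R), eval (Function.update x k r) Q = eval x Q) :
    ∀ d ∈ Q.support, d k = 0 := by
  have hQ : Q = aeval (Function.update X k 0) Q := MvPolynomial.funext fun x => by
    rw [eval_aeval, ← h x 0]
    congr 2
    funext i
    by_cases hi : i = k <;> simp [hi]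
  intro d hd
  by_contra hdk
  have hk : k ∈ Q.vars :=
    (mem_vars_iff_mem_support k).mpr ⟨d, hd, Finsupp.mem_support_iff.mpr hdk⟩
  rw [hQ, aeval_eq_bind₁] at hk
  obtain ⟨i, -, hi⟩ := mem_vars_bind₁ _ _ hk
  by_cases hik : i = k <;> simp [hik, vars_X] at hi
  exact hik hi.symm

theorem MvPolynomial.eq_of_eval_eq_of_eval_ne_zero {σ R : Type*} [CommRing R] [IsDomain R]
    [Infinite R] {r p q : MvPolynomial σ R} (hr : r ≠ 0)
    (h : ∀ x, eval x r ≠ 0 → eval x p = eval x q) : p = q := by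
  have hrpq : r * (p - q) = 0 := MvPolynomial.funext fun x => by
    by_cases hx : eval x r = 0
    · simp [hx]
    · simp [h x hx]
  exact sub_eq_zero.mp ((mul_eq_zero.mp hrpq).resolve_left hr)

theorem MvPolynomial.dvd_aeval_sub_self {R σ : Type*} [CommRing R] {r : MvPolynomial σ R}
    {g : σ → MvPolynomial σ R} (hg : ∀ i, r ∣ g i - X i) (Q : MvPolynomial σ R) :
    r ∣ aeval g Q - Q := by
  set I := Ideal.span {r}
  have h : (Ideal.Quotient.mkₐ R I).comp (aeval g) = (Ideal.Quotient.mkₐ R I).comp (aeval X) :=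
    algHom_ext fun i => by simpa [Ideal.Quotient.eq, Ideal.mem_span_singleton, I] using hg i
  simpa [Ideal.Quotient.eq, Ideal.mem_span_singleton, I, aeval_X_left_apply] using
    AlgHom.congr_fun h Q

/- A linear functional on `A ⧸ N` turns `p` into a scalar polynomial vanishing at every
`t ≠ 0`. -/
theorem Polynomial.coeff_mem_of_forall_eval_mem {K A : Type*} [Field K] [Infinite K]
    [CommRing A] [Algebra K A] (N : Submodule K A) (p : Polynomial A)
    (h : ∀ t : K, t ≠ 0 → p.eval (algebraMap K A t) ∈ N) (j : ℕ) : p.coeff j ∈ N := by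
  rw [← Submodule.Quotient.mk_eq_zero]
  refine (Module.forall_dual_apply_eq_zero_iff K _).mp fun φ => ?_
  set ψ := φ ∘ₗ N.mkQ
  set n := p.natDegree + j + 1
  let q : Polynomial K := ∑ i ∈ Finset.range n, Polynomial.monomial i (ψ (p.coeff i))
  have hq : q = 0 := by
    refine Polynomial.eq_zero_of_infinite_isRoot q
      ((Set.finite_singleton 0).infinite_compl.mono fun t ht => ?_)
    calc q.eval t = ψ (∑ i ∈ Finset.range n, t ^ i • p.coeff i) := by
          simp [q, Polynomial.eval_finsetSum, map_sum, mul_comm]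
      _ = ψ (p.eval (algebraMap K A t)) := by
          rw [Polynomial.eval_eq_sum_range' (n := n) (by omega)]
          simp [Algebra.smul_def, mul_comm]
      _ = 0 := by simp [ψ, (Submodule.Quotient.mk_eq_zero N).mpr (h t ht)]
  simpa [q, Polynomial.finsetSum_coeff, Polynomial.coeff_monomial, ψ, n] using
    congrArg (Polynomial.coeff · j) hq

theorem MvPolynomial.aeval_mem_of_forall_aeval_add_smul_mem {K σ A : Type*} [Field K]
    [Infinite K] [CommRing A] [Algebra K A] (N : Submodule K A) (p₀ p₁ : σ → A)
    (Q : MvPolynomial σ K) (h : ∀ t : K, t ≠ 0 → aeval (p₀ + t • p₁) Q ∈ N) :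
    aeval p₀ Q ∈ N := by
  set Φ : MvPolynomial σ K →ₐ[K] Polynomial A :=
    aeval fun i => Polynomial.C (p₀ i) + Polynomial.X * Polynomial.C (p₁ i)
  have hΦ : ∀ s : A, (Φ Q).eval s = aeval (fun i => p₀ i + s * p₁ i) Q := by
    intro s
    clear h
    induction Q using MvPolynomial.induction_on with
    | C r => simp [Φ]
    | add p q hp hq => simp only [map_add, Polynomial.eval_add, hp, hq]
    | mul_X p i hp =>
      simp only [map_mul, Polynomial.eval_mul, hp, Φ, aeval_X, Polynomial.eval_add,
        Polynomial.eval_C, Polynomial.eval_X]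
  have h0 := Polynomial.coeff_mem_of_forall_eval_mem N (Φ Q) (fun t ht => ?_) 0
  · simpa [Polynomial.coeff_zero_eq_eval_zero, hΦ] using h0
  · convert h t ht using 2
    rw [hΦ]
    congr 2
    funext i
    simp [Algebra.smul_def]

variable {m : ℕ}

def IsCanonical (N : Submodule ℝ (MvPolynomial (Fin m) ℝ)) (M : Matrix (Fin m) (Fin m) ℝ)
    (v : Fin m → ℝ) : Prop :=
  ∀ Q ∈ N, affinePullback M v Q ∈ N

theorem eval_affinePullback (B : Matrix (Fin m) (Fin m) ℝ) (b x : Fin m → ℝ)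
    (Q : MvPolynomial (Fin m) ℝ) : eval x (affinePullback B b Q) = eval (B *ᵥ x + b) Q := by
  rw [affinePullback, eval_aeval]
  congr 2
  funext i
  simp [mulVec, dotProduct]

theorem affinePullback_affinePullback {B B' M : Matrix (Fin m) (Fin m) ℝ} {b b' v : Fin m → ℝ}
    (h : ∀ x, B' *ᵥ (B *ᵥ x + b) + b' = M *ᵥ x + v) (Q : MvPolynomial (Fin m) ℝ) :
    affinePullback B b (affinePullback B' b' Q) = affinePullback M v Q :=
  MvPolynomial.funext fun x => by simp only [eval_affinePullback, h]

theorem affinePullback_injective {B : Matrix (Fin m) (Fin m) ℝ} (hB : IsUnit B)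
    (b : Fin m → ℝ) : Function.Injective (affinePullback B b) := by
  intro Q Q' h
  refine MvPolynomial.funext fun y => ?_
  have hy : B *ᵥ (B⁻¹ *ᵥ (y - b)) + b = y := by
    rw [mulVec_mulVec, mul_nonsing_inv _ ((isUnit_iff_isUnit_det B).mp hB), one_mulVec,
      sub_add_cancel]
  simpa only [eval_affinePullback, hy] using congrArg (eval (B⁻¹ *ᵥ (y - b))) h

theorem IsCanonical.of_image_eq {N : Submodule ℝ (MvPolynomial (Fin m) ℝ)}
    {H K : Set (Fin m → ℝ)}
    (hcanon : ∀ (B : Matrix (Fin m) (Fin m) ℝ) (b : Fin m → ℝ), IsUnit B →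
      (fun x => B *ᵥ x + b) '' H = K → IsCanonical N B b)
    {S : Matrix (Fin m) (Fin m) ℝ} {s : Fin m → ℝ} (hS : IsUnit S)
    (hSS : ∀ x, S *ᵥ (S *ᵥ x + s) + s = x) (hSH : (fun x => S *ᵥ x + s) '' H = K)
    {M : Matrix (Fin m) (Fin m) ℝ} {v : Fin m → ℝ} (hM : IsUnit M)
    (hMH : (fun x => M *ᵥ x + v) '' H = H) : IsCanonical N M v := by
  intro Q hQ
  have hcomp : (fun x => (S * M) *ᵥ x + (S *ᵥ v + s))
      = (fun x => S *ᵥ x + s) ∘ (fun x => M *ᵥ x + v) := by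
    funext x
    simp only [Function.comp_apply, mulVec_add, mulVec_mulVec, add_assoc]
  have hSMv : affinePullback (S * M) (S *ᵥ v + s) (affinePullback S s Q)
      = affinePullback M v Q :=
    affinePullback_affinePullback (fun x => by
      simpa only [Function.comp_apply, hSS] using
        congrArg (fun y => S *ᵥ y + s) (congrFun hcomp x)) Q
  rw [← hSMv]
  exact hcanon _ _ (hS.mul hM) (by rw [hcomp, Set.image_comp, hMH, hSH]) _
    (hcanon S s hS hSH Q hQ)

section Stretch

variable (g w : Fin m → ℝ) (e : ℝ)

/- Fixes the hyperplane `g ⬝ x + e = 0` pointwise and multiplies `g ⬝ x + e` by `t` (when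
`g ⬝ w = 1`): the identity for `t = 1`, a reflection for `t = -1`, the projection along `w`
for `t = 0`. -/
def affineStretch (t : ℝ) (x : Fin m → ℝ) : Fin m → ℝ :=
  x - ((1 - t) * (g ⬝ᵥ x + e)) • w

def stretchMatrix (t : ℝ) : Matrix (Fin m) (Fin m) ℝ :=
  1 - (1 - t) • vecMulVec w g

theorem stretchMatrix_mulVec_add (t : ℝ) (x : Fin m → ℝ) :
    stretchMatrix g w t *ᵥ x + (-((1 - t) * e)) • w = affineStretch g w e t x := by
  simp only [stretchMatrix, affineStretch, sub_mulVec, one_mulVec, smul_mulVec,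
    vecMulVec_mulVec, op_smul_eq_smul]
  module

theorem dotProduct_affineStretch (a : Fin m → ℝ) (t : ℝ) (x : Fin m → ℝ) :
    a ⬝ᵥ affineStretch g w e t x = a ⬝ᵥ x - (1 - t) * (g ⬝ᵥ x + e) * (a ⬝ᵥ w) := by
  simp [affineStretch, dotProduct_sub, dotProduct_smul, mul_assoc]

variable {g w}

theorem affineStretch_affineStretch (hgw : g ⬝ᵥ w = 1) (t s : ℝ) (x : Fin m → ℝ) :
    affineStretch g w e t (affineStretch g w e s x) = affineStretch g w e (t * s) x := by
  have h : g ⬝ᵥ affineStretch g w e s x + e = s * (g ⬝ᵥ x + e) := by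
    rw [dotProduct_affineStretch, hgw]; ring
  rw [affineStretch, h]
  simp only [affineStretch]
  module

theorem affineStretch_one (x : Fin m → ℝ) : affineStretch g w e 1 x = x := by
  simp [affineStretch]

theorem isUnit_stretchMatrix (hgw : g ⬝ᵥ w = 1) {t : ℝ} (ht : t ≠ 0) :
    IsUnit (stretchMatrix g w t) := by
  have hM : ∀ s x, stretchMatrix g w s *ᵥ x = affineStretch g w 0 s x := fun s x => by
    simpa using stretchMatrix_mulVec_add g w 0 s x
  refine mulVec_injective_iff_isUnit.mp fun x y hxy => ?_
  simpa only [hM, affineStretch_affineStretch _ hgw, inv_mul_cancel₀ ht, affineStretch_one]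
    using congrArg (affineStretch g w 0 t⁻¹) hxy

theorem image_affineStretch {H : Set (Fin m → ℝ)} (hgw : g ⬝ᵥ w = 1)
    (hH : ∀ t ≠ 0, ∀ x, affineStretch g w e t x ∈ H ↔ x ∈ H) {t : ℝ} (ht : t ≠ 0) :
    affineStretch g w e t '' H = H := by
  have hinv : ∀ s r : ℝ, s * r = 1 →
      Function.LeftInverse (affineStretch g w e s) (affineStretch g w e r) := fun s r h x => by
    rw [affineStretch_affineStretch _ hgw, h, affineStretch_one]
  rw [Set.image_eq_preimage_of_inverse (hinv _ _ (inv_mul_cancel₀ ht))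
    (hinv _ _ (mul_inv_cancel₀ ht))]
  ext x
  exact hH _ (inv_ne_zero ht) x

theorem affinePullback_stretchMatrix {L : MvPolynomial (Fin m) ℝ}
    (hL : ∀ x, eval x L = g ⬝ᵥ x + e) (t : ℝ) :
    affinePullback (stretchMatrix g w t) (-((1 - t) * e) • w)
      = aeval ((fun i => X i - C (w i) * L) + t • fun i => C (w i) * L) := by
  refine algHom_ext fun i => MvPolynomial.funext fun x => ?_
  rw [eval_affinePullback, stretchMatrix_mulVec_add, aeval_X]
  simp [affineStretch, hL]
  ring

end Stretch

theorem exists_apply_eq_one_dotProduct_ne_zero {a : Fin m → ℝ} (ha : a ≠ 0) (k : Fin m) :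
    ∃ v : Fin m → ℝ, v k = 1 ∧ a ⬝ᵥ v ≠ 0 := by
  by_cases hak : a k = 0
  · obtain ⟨j, hj⟩ := Function.ne_iff.mp ha
    have hjk : j ≠ k := fun h => hj (h ▸ hak)
    refine ⟨Pi.single k 1 + Pi.single j 1, by simp [hjk], ?_⟩
    simpa [dotProduct_add, hak] using hj
  · exact ⟨Pi.single k 1, by simp, by simpa using hak⟩

theorem exists_involution_image_eq {a : Fin m → ℝ} (ha : a ≠ 0) (c : ℝ) (k : Fin m) :
    ∃ (S : Matrix (Fin m) (Fin m) ℝ) (s : Fin m → ℝ), IsUnit S ∧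
      (∀ x, S *ᵥ (S *ᵥ x + s) + s = x) ∧
      (fun x => S *ᵥ x + s) '' {x | a ⬝ᵥ x + c = 0} = {x | x k = 0} := by
  obtain ⟨v, hvk, hav⟩ := exists_apply_eq_one_dotProduct_ne_zero ha k
  -- the reflection along `v` in the hyperplane `x k + (a ⬝ᵥ v)⁻¹ * (a ⬝ᵥ x + c) = 0`
  set g : Fin m → ℝ := (1 / 2 : ℝ) • (Pi.single k 1 + (a ⬝ᵥ v)⁻¹ • a)
  set e : ℝ := 1 / 2 * ((a ⬝ᵥ v)⁻¹ * c)
  have hgv : g ⬝ᵥ v = 1 := by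
    simp [g, add_dotProduct, smul_dotProduct, hvk, inv_mul_cancel₀ hav]
    norm_num
  have hσ : ∀ x, stretchMatrix g v (-1) *ᵥ x + (-((1 - -1) * e)) • v
      = affineStretch g v e (-1) x :=
    stretchMatrix_mulVec_add g v e (-1)
  have hk : ∀ x, affineStretch g v e (-1) x k = -(a ⬝ᵥ v)⁻¹ * (a ⬝ᵥ x + c) := fun x => by
    simp [affineStretch, g, e, hvk, add_dotProduct, smul_dotProduct]
    ring
  have hH : ∀ x, a ⬝ᵥ affineStretch g v e (-1) x + c = -(a ⬝ᵥ v) * x k := fun x => by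
    rw [dotProduct_affineStretch]
    simp [g, e, add_dotProduct, smul_dotProduct]
    field_simp
    ring
  have hinv : ∀ x, affineStretch g v e (-1) (affineStretch g v e (-1) x) = x := fun x => by
    rw [affineStretch_affineStretch _ hgv]
    norm_num [affineStretch_one]
  refine ⟨_, _, isUnit_stretchMatrix hgv (neg_ne_zero.mpr one_ne_zero),
    fun x => by rw [hσ, hσ, hinv], ?_⟩
  simp only [hσ]
  ext y
  constructor
  · rintro ⟨x, hx, rfl⟩
    show affineStretch g v e (-1) x k = 0
    rw [hk, show a ⬝ᵥ x + c = 0 from hx, mul_zero]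
  · intro hy
    refine ⟨affineStretch g v e (-1) y, show a ⬝ᵥ _ + c = 0 from ?_, hinv y⟩
    rw [hH, show y k = 0 from hy, mul_zero]

def projectionPullback (L : MvPolynomial (Fin m) ℝ) (w : Fin m → ℝ) :
    MvPolynomial (Fin m) ℝ →ₐ[ℝ] MvPolynomial (Fin m) ℝ :=
  aeval fun i => X i - C (w i) * L

theorem eval_projectionPullback (L : MvPolynomial (Fin m) ℝ) (w x : Fin m → ℝ)
    (Q : MvPolynomial (Fin m) ℝ) :
    eval x (projectionPullback L w Q) = eval (x - eval x L • w) Q := by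
  rw [projectionPullback, eval_aeval]
  congr 2
  funext i
  simp [mul_comm]

theorem eval_add_smul_projectionPullback {g w : Fin m → ℝ} {e : ℝ}
    {L : MvPolynomial (Fin m) ℝ} (hL : ∀ x, eval x L = g ⬝ᵥ x + e) (hgw : g ⬝ᵥ w = 1)
    (Q : MvPolynomial (Fin m) ℝ) (x : Fin m → ℝ) (s : ℝ) :
    eval (x + s • w) (projectionPullback L w Q) = eval x (projectionPullback L w Q) := by
  simp only [eval_projectionPullback, hL, dotProduct_add, dotProduct_smul, hgw, smul_eq_mul]
  congr 2
  module

theorem dvd_sub_projectionPullback (L : MvPolynomial (Fin m) ℝ) (w : Fin m → ℝ)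
    (Q : MvPolynomial (Fin m) ℝ) : L ∣ Q - projectionPullback L w Q := by
  rw [← dvd_neg, neg_sub]
  exact dvd_aeval_sub_self (fun i => ⟨-C (w i), by ring⟩) Q

theorem projectionPullback_mem {N : Submodule ℝ (MvPolynomial (Fin m) ℝ)}
    {H : Set (Fin m → ℝ)}
    (hN : ∀ M v, IsUnit M → (fun x => M *ᵥ x + v) '' H = H → IsCanonical N M v)
    {g w : Fin m → ℝ} {e : ℝ} (hgw : g ⬝ᵥ w = 1) {L : MvPolynomial (Fin m) ℝ}
    (hL : ∀ x, eval x L = g ⬝ᵥ x + e)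
    (hH : ∀ t ≠ 0, ∀ x, affineStretch g w e t x ∈ H ↔ x ∈ H) {Q : MvPolynomial (Fin m) ℝ}
    (hQ : Q ∈ N) : projectionPullback L w Q ∈ N := by
  refine aeval_mem_of_forall_aeval_add_smul_mem N _ (fun i => C (w i) * L) Q fun t ht => ?_
  rw [← affinePullback_stretchMatrix e hL]
  refine hN _ _ (isUnit_stretchMatrix hgw ht) ?_ Q hQ
  simpa only [stretchMatrix_mulVec_add] using image_affineStretch e hgw hH ht

theorem eq_zero_of_forall_eval_add_smul_eq {N : Submodule ℝ (MvPolynomial (Fin m) ℝ)}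
    {Z : Set (Fin m → ℝ)} {B : Matrix (Fin m) (Fin m) ℝ} {b : Fin m → ℝ} {k : Fin m}
    (hB : IsUnit B) (hBN : IsCanonical N B b)
    (hi : ¬ ∃ Q : MvPolynomial (Fin m) ℝ,
      (Q ∈ N ∧ affinePullback B b Q ∈ N ∧ ∀ d ∈ (affinePullback B b Q).support, d k = 0) ∧
      affinePullback B b Q ≠ 0 ∧ ∀ x ∈ Z, eval x Q = 0)
    {T : MvPolynomial (Fin m) ℝ} (hT : T ∈ N)
    (hTinv : ∀ x (s : ℝ), eval (x + s • B *ᵥ Pi.single k 1) T = eval x T)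
    (hTZ : ∀ x ∈ Z, eval x T = 0) : T = 0 := by
  have hupdate : ∀ (y : Fin m → ℝ) r,
      B *ᵥ Function.update y k r + b = B *ᵥ y + b + (r - y k) • B *ᵥ Pi.single k 1 := by
    intro y r
    have : Function.update y k r = y + (r - y k) • Pi.single k 1 := by
      ext i
      by_cases hi : i = k
      · subst hi; simp
      · simp [hi]
    rw [this, mulVec_add, mulVec_smul]
    abel
  have hfree : ∀ d ∈ (affinePullback B b T).support, d k = 0 :=
    eq_zero_of_mem_support_of_forall_eval_update_eq fun y r => by
      rw [eval_affinePullback, eval_affinePullback, hupdate, hTinv]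
  by_contra hT0
  exact hi ⟨T, ⟨hT, hBN T hT, hfree⟩,
    fun h => hT0 (affinePullback_injective hB b (h.trans (map_zero _).symm)), hTZ⟩

theorem exists_eval_eq_dotProduct_add_of_totalDegree_eq_one {QH : MvPolynomial (Fin m) ℝ}
    (hQH : QH.totalDegree = 1) : ∃ a ≠ 0, ∃ c : ℝ, ∀ x, eval x QH = a ⬝ᵥ x + c := by
  have hrep := eq_sum_C_mul_X_add_C_of_totalDegree_le_one hQH.le
  refine ⟨fun i => coeff (Finsupp.single i 1) QH, fun ha => ?_, coeff 0 QH, fun x => ?_⟩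
  · rw [hrep] at hQH
    simp [show ∀ i, coeff (Finsupp.single i 1) QH = 0 from congrFun ha] at hQH
  · conv_lhs => rw [hrep]
    simp [dotProduct]

section Unisolvence

variable {N : Submodule ℝ (MvPolynomial (Fin m) ℝ)} {P : Set (Fin m → ℝ)}
  {QH : MvPolynomial (Fin m) ℝ} {a : Fin m → ℝ} {c : ℝ}

theorem projectionPullback_mem_of_dotProduct_eq_one (hQH : ∀ x, eval x QH = a ⬝ᵥ x + c)
    (hN : ∀ M v, IsUnit M →
      (fun x => M *ᵥ x + v) '' {x | eval x QH = 0} = {x | eval x QH = 0} → IsCanonical N M v)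
    {w : Fin m → ℝ} (haw : a ⬝ᵥ w = 1) {Q : MvPolynomial (Fin m) ℝ} (hQ : Q ∈ N) :
    projectionPullback QH w Q ∈ N :=
  projectionPullback_mem hN haw hQH (fun t ht x => by
    have h : a ⬝ᵥ affineStretch a w c t x + c = t * (a ⬝ᵥ x + c) := by
      rw [dotProduct_affineStretch, haw]; ring
    simp [hQH, h, ht]) hQ

theorem projectionPullback_mem_of_dotProduct_eq_zero (hQH : ∀ x, eval x QH = a ⬝ᵥ x + c)
    (hN : ∀ M v, IsUnit M →
      (fun x => M *ᵥ x + v) '' {x | eval x QH = 0} = {x | eval x QH = 0} → IsCanonical N M v)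
    {g u : Fin m → ℝ} {e : ℝ} (hgu : g ⬝ᵥ u = 1) (hau : a ⬝ᵥ u = 0)
    {L : MvPolynomial (Fin m) ℝ} (hL : ∀ x, eval x L = g ⬝ᵥ x + e)
    {Q : MvPolynomial (Fin m) ℝ} (hQ : Q ∈ N) : projectionPullback L u Q ∈ N :=
  projectionPullback_mem hN hgu hL (fun t _ x => by
    simp [hQH, dotProduct_affineStretch, hau]) hQ

theorem eq_zero_of_dotProduct_ne_zero (hQH : ∀ x, eval x QH = a ⬝ᵥ x + c)
    (hN : ∀ M v, IsUnit M →
      (fun x => M *ᵥ x + v) '' {x | eval x QH = 0} = {x | eval x QH = 0} → IsCanonical N M v)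
    {u : Fin m → ℝ} (hau : a ⬝ᵥ u ≠ 0)
    (hi : ∀ T ∈ N, (∀ x (s : ℝ), eval (x + s • u) T = eval x T) →
      (∀ x ∈ P ∩ {x | eval x QH = 0}, eval x T = 0) → T = 0)
    (hii : ¬ ∃ Q : MvPolynomial (Fin m) ℝ,
      QH * Q ∈ N ∧ Q ≠ 0 ∧ ∀ x ∈ P \ {x | eval x QH = 0}, eval x Q = 0)
    {D : MvPolynomial (Fin m) ℝ} (hD : D ∈ N) (hDP : ∀ x ∈ P, eval x D = 0) : D = 0 := by
  set w := (a ⬝ᵥ u)⁻¹ • u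
  have haw : a ⬝ᵥ w = 1 := by simp [w, dotProduct_smul, inv_mul_cancel₀ hau]
  have hT : projectionPullback QH w D = 0 :=
    hi _ (projectionPullback_mem_of_dotProduct_eq_one hQH hN haw hD)
      (fun x s => by
        simpa [w, smul_smul, mul_assoc, mul_inv_cancel₀ hau] using
          eval_add_smul_projectionPullback hQH haw D x (s * a ⬝ᵥ u))
      fun x hx => by simp [eval_projectionPullback, hx.2.out, hDP x hx.1]
  obtain ⟨E, hE⟩ := dvd_sub_projectionPullback QH w D
  rw [hT, sub_zero] at hE
  by_contra hD0
  refine hii ⟨E, hE ▸ hD, fun hE0 => hD0 (by rw [hE, hE0, mul_zero]), fun x hx => ?_⟩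
  have h := hDP x hx.1
  rw [hE, map_mul] at h
  exact (mul_eq_zero.mp h).resolve_left hx.2

theorem eq_zero_of_eval_eq_zero_of_dotProduct_eq_zero (hQH : ∀ x, eval x QH = a ⬝ᵥ x + c)
    (hN : ∀ M v, IsUnit M →
      (fun x => M *ᵥ x + v) '' {x | eval x QH = 0} = {x | eval x QH = 0} → IsCanonical N M v)
    {u : Fin m → ℝ} (hu : u ≠ 0) (hau : a ⬝ᵥ u = 0)
    (hi : ∀ T ∈ N, (∀ x (s : ℝ), eval (x + s • u) T = eval x T) →
      (∀ x ∈ P ∩ {x | eval x QH = 0}, eval x T = 0) → T = 0)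
    {F : MvPolynomial (Fin m) ℝ} (hF : F ∈ N) (hFH : ∀ x, eval x QH = 0 → eval x F = 0) :
    F = 0 := by
  set g := (u ⬝ᵥ u)⁻¹ • u
  have hgu : g ⬝ᵥ u = 1 := by
    simp [g, smul_dotProduct, inv_mul_cancel₀ (dotProduct_self_eq_zero.not.mpr hu)]
  refine MvPolynomial.funext fun x₀ => ?_
  set L : MvPolynomial (Fin m) ℝ := ∑ j, C (g j) * X j + C (-(g ⬝ᵥ x₀))
  have hL : ∀ x, eval x L = g ⬝ᵥ x + -(g ⬝ᵥ x₀) := fun x => by simp [L, dotProduct]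
  have hW := hi _ (projectionPullback_mem_of_dotProduct_eq_zero hQH hN hgu hau hL hF)
    (eval_add_smul_projectionPullback hL hgu F) fun x hx => by
      rw [eval_projectionPullback]
      apply hFH
      rw [hQH, dotProduct_sub, dotProduct_smul, hau, smul_zero, sub_zero, ← hQH]
      exact hx.2
  simpa [eval_projectionPullback, hL] using congrArg (eval x₀) hW

theorem eq_zero_of_dotProduct_eq_zero (hQH : ∀ x, eval x QH = a ⬝ᵥ x + c) (hQH0 : QH ≠ 0)
    (ha : a ≠ 0)
    (hN : ∀ M v, IsUnit M →
      (fun x => M *ᵥ x + v) '' {x | eval x QH = 0} = {x | eval x QH = 0} → IsCanonical N M v)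
    {u : Fin m → ℝ} (hu : u ≠ 0) (hau : a ⬝ᵥ u = 0)
    (hi : ∀ T ∈ N, (∀ x (s : ℝ), eval (x + s • u) T = eval x T) →
      (∀ x ∈ P ∩ {x | eval x QH = 0}, eval x T = 0) → T = 0)
    {D : MvPolynomial (Fin m) ℝ} (hD : D ∈ N) (hDP : ∀ x ∈ P, eval x D = 0) : D = 0 := by
  have hproj : ∀ w, a ⬝ᵥ w = 1 → ∀ x, eval x D = eval (x - eval x QH • w) D := by
    intro w haw x
    have h := eq_zero_of_eval_eq_zero_of_dotProduct_eq_zero hQH hN hu hau hi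
      (N.sub_mem hD (projectionPullback_mem_of_dotProduct_eq_one hQH hN haw hD))
      fun y hy => by simp [eval_projectionPullback, hy]
    simpa [eval_projectionPullback, sub_eq_zero] using congrArg (eval x) h
  set w₀ := (a ⬝ᵥ a)⁻¹ • a
  have haw₀ : a ⬝ᵥ w₀ = 1 := by
    simp [w₀, dotProduct_smul, inv_mul_cancel₀ (dotProduct_self_eq_zero.not.mpr ha)]
  have hinv : ∀ x (s : ℝ), eval (x + s • u) D = eval x D := by
    intro x s
    have h : affinePullback 1 (s • u) D = D := eq_of_eval_eq_of_eval_ne_zero hQH0 fun y hy => by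
      -- `y + s • u` projects along `w₀` to the point `y` projects to along `w`
      set w := w₀ - (s / eval y QH) • u
      have haw : a ⬝ᵥ w = 1 := by simp [w, dotProduct_sub, dotProduct_smul, hau, haw₀]
      have hQHy : eval (y + s • u) QH = eval y QH := by
        simp [hQH, dotProduct_add, dotProduct_smul, hau]
      rw [eval_affinePullback, one_mulVec, hproj w₀ haw₀, hproj w haw y, hQHy]
      congr 2
      rw [smul_sub, smul_smul _ (s / _), mul_div_cancel₀ _ hy]
      abel
    simpa [eval_affinePullback] using congrArg (eval x) h
  exact hi D hD hinv fun x hx => hDP x hx.1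

theorem eq_zero_of_unisolvent {H : Set (Fin m → ℝ)} {B : Matrix (Fin m) (Fin m) ℝ}
    {b : Fin m → ℝ} {k : Fin m} (hQHdeg : QH.totalDegree = 1) (hH : H = {x | eval x QH = 0})
    (hcanon : ∀ (B' : Matrix (Fin m) (Fin m) ℝ) (b' : Fin m → ℝ), IsUnit B' →
      (fun x => B' *ᵥ x + b') '' H = {x | x k = 0} → IsCanonical N B' b')
    (hB : IsUnit B) (himg : (fun x => B *ᵥ x + b) '' H = {x | x k = 0})
    (hi : ¬ ∃ Q : MvPolynomial (Fin m) ℝ,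
      (Q ∈ N ∧ affinePullback B b Q ∈ N ∧ ∀ d ∈ (affinePullback B b Q).support, d k = 0) ∧
      affinePullback B b Q ≠ 0 ∧ ∀ x ∈ P ∩ H, eval x Q = 0)
    (hii : ¬ ∃ Q : MvPolynomial (Fin m) ℝ, QH * Q ∈ N ∧ Q ≠ 0 ∧ ∀ x ∈ P \ H, eval x Q = 0)
    {D : MvPolynomial (Fin m) ℝ} (hD : D ∈ N) (hDP : ∀ x ∈ P, eval x D = 0) : D = 0 := by
  subst hH
  obtain ⟨a, ha, c, hQH⟩ := exists_eval_eq_dotProduct_add_of_totalDegree_eq_one hQHdeg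
  have hQH0 : QH ≠ 0 := by rintro rfl; simp at hQHdeg
  obtain ⟨S, s, hS, hSS, hSH⟩ := exists_involution_image_eq ha c k
  have hHeq : {x | eval x QH = 0} = {x | a ⬝ᵥ x + c = 0} := by simp only [hQH]
  have hN : ∀ M v, IsUnit M →
      (fun x => M *ᵥ x + v) '' {x | eval x QH = 0} = {x | eval x QH = 0} → IsCanonical N M v :=
    fun M v hM hMH => IsCanonical.of_image_eq hcanon hS hSS (hHeq ▸ hSH) hM hMH
  have hu : B *ᵥ Pi.single k 1 ≠ 0 := by
    simpa using (mulVec_injective_iff_isUnit.mpr hB).ne (Pi.single_ne_zero_iff.mpr one_ne_zero)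
  have hi' := fun T hT hTinv hTZ =>
    eq_zero_of_forall_eval_add_smul_eq (T := T) hB (hcanon B b hB himg) hi hT hTinv hTZ
  by_cases hau : a ⬝ᵥ B *ᵥ Pi.single k 1 = 0
  · exact eq_zero_of_dotProduct_eq_zero hQH hQH0 ha hN hu hau hi' hD hDP
  · exact eq_zero_of_dotProduct_ne_zero hQH hN hau hi' hii hD hDP

end Unisolvence

theorem interpolant_split_general (m : ℕ) (hm : 0 < m)
    (Pspace : Submodule ℝ (MvPolynomial (Fin m) ℝ))
    (P : Set (Fin m → ℝ))
    (QH : MvPolynomial (Fin m) ℝ)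
    -- `Q_H ∈ Π_{m,1,1} \ {0}` cutting out a hyperplane of co-dimension 1
    (hQHdeg : QH.totalDegree = 1)
    (H : Set (Fin m → ℝ)) (hH : H = {x | eval x QH = 0})
    -- every affine transformation mapping `H` onto `ℝ^{m-1} × {0}` is canonical w.r.t. `Π`
    (hcanon : ∀ (B' : Matrix (Fin m) (Fin m) ℝ) (b' : Fin m → ℝ), IsUnit B' →
      (fun x => B'.mulVec x + b') '' H = {x | x ⟨m - 1, Nat.sub_lt hm Nat.one_pos⟩ = 0} →
      ∀ Q ∈ Pspace, affinePullback B' b' Q ∈ Pspace)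
    -- a fixed affine transformation `τ_H` with `τ_H(H) = ℝ^{m-1} × {0}`
    (B : Matrix (Fin m) (Fin m) ℝ) (b : Fin m → ℝ) (hB : IsUnit B)
    (himg : (fun x => B.mulVec x + b) '' H
      = {x | x ⟨m - 1, Nat.sub_lt hm Nat.one_pos⟩ = 0})
    -- (i): there is no `Q ∈ Π_{|H}` with `τ_H^* Q ≠ 0` vanishing on `P ∩ H`
    (hi : ¬ ∃ Q : MvPolynomial (Fin m) ℝ,
      (Q ∈ Pspace ∧ affinePullback B b Q ∈ Pspace ∧
        ∀ d ∈ (affinePullback B b Q).support, d ⟨m - 1, Nat.sub_lt hm Nat.one_pos⟩ = 0) ∧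
      affinePullback B b Q ≠ 0 ∧ ∀ x ∈ P ∩ H, eval x Q = 0)
    -- (ii): there is no nonzero `Q ∈ Π_{|H̄}` vanishing on `P \ H`
    (hii : ¬ ∃ Q : MvPolynomial (Fin m) ℝ,
      QH * Q ∈ Pspace ∧ Q ≠ 0 ∧ ∀ x ∈ P \ H, eval x Q = 0)
    -- the function to interpolate and the two partial interpolants
    (f : (Fin m → ℝ) → ℝ)
    (Q₁ : MvPolynomial (Fin m) ℝ)
    -- `Q₁ ∈ Π_{|H}`
    (hQ₁mem : Q₁ ∈ Pspace ∧ affinePullback B b Q₁ ∈ Pspace ∧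
      ∀ d ∈ (affinePullback B b Q₁).support, d ⟨m - 1, Nat.sub_lt hm Nat.one_pos⟩ = 0)
    (Q₂ : MvPolynomial (Fin m) ℝ)
    -- `Q₂ ∈ Π_{|H̄}`
    (hQ₂mem : QH * Q₂ ∈ Pspace)
    -- (i): `Q₁(p) = f(p)` for all `p ∈ P ∩ H`
    (hQ₁int : ∀ x ∈ P ∩ H, eval x Q₁ = f x)
    -- (ii): `Q₂(p) = (f(p) - Q₁(p))/Q_H(p)` for all `p ∈ P \ H`
    (hQ₂int : ∀ x ∈ P \ H, eval x Q₂ = (f x - eval x Q₁) / eval x QH) :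
    -- conclusion: `Q = Q₁ + Q_H·Q₂ ∈ Π` is the unique interpolant of `f` on `P` in `Π`
    Q₁ + QH * Q₂ ∈ Pspace ∧ (∀ x ∈ P, eval x (Q₁ + QH * Q₂) = f x) ∧
      ∀ Q' ∈ Pspace, (∀ x ∈ P, eval x Q' = f x) → Q' = Q₁ + QH * Q₂ := by
  have hQ : Q₁ + QH * Q₂ ∈ Pspace := Pspace.add_mem hQ₁mem.1 hQ₂mem
  have hint : ∀ x ∈ P, eval x (Q₁ + QH * Q₂) = f x := by
    intro x hx
    by_cases hxH : x ∈ H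
    · have hx0 : eval x QH = 0 := by rwa [hH] at hxH
      simp [hx0, hQ₁int x ⟨hx, hxH⟩]
    · have hx0 : eval x QH ≠ 0 := by rwa [hH] at hxH
      rw [map_add, map_mul, hQ₂int x ⟨hx, hxH⟩, mul_div_cancel₀ _ hx0, add_sub_cancel]
  refine ⟨hQ, hint, fun Q' hQ' hQ'int => sub_eq_zero.mp ?_⟩
  exact eq_zero_of_unisolvent hQHdeg hH hcanon hB himg hi hii (Pspace.sub_mem hQ' hQ)
    fun x hx => by rw [map_sub, hQ'int x hx, hint x hx, sub_self]

/-- Under pair-unisolvence of `P` with respect to `(Π, H)`, if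
`Q₁ ∈ Π_{|H}` interpolates `f` on `P ∩ H` and `Q₂ ∈ Π_{|H̄}` satisfies
`Q₂(p) = (f(p) - Q₁(p))/Q_H(p)` on `P \ H`, then `Q = Q₁ + Q_H·Q₂ ∈ Π` is the unique
polynomial in `Π` interpolating `f` on `P`. -/
theorem interpolant_split (m : ℕ) (hm : 0 < m)
    (Pspace : Submodule ℝ (MvPolynomial (Fin m) ℝ))
    (P : Set (Fin m → ℝ)) (hPfin : P.Finite) (hPne : P.Nonempty)
    (QH : MvPolynomial (Fin m) ℝ)
    -- `Q_H ∈ Π_{m,1,1} \ {0}` cutting out a hyperplane of co-dimension 1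
    (hQHdeg : QH.totalDegree = 1)
    (H : Set (Fin m → ℝ)) (hH : H = {x | eval x QH = 0})
    -- every affine transformation mapping `H` onto `ℝ^{m-1} × {0}` is canonical w.r.t. `Π`
    (hcanon : ∀ (B' : Matrix (Fin m) (Fin m) ℝ) (b' : Fin m → ℝ), IsUnit B' →
      (fun x => B'.mulVec x + b') '' H = {x | x ⟨m - 1, Nat.sub_lt hm Nat.one_pos⟩ = 0} →
      ∀ Q ∈ Pspace, affinePullback B' b' Q ∈ Pspace)
    -- a fixed affine transformation `τ_H` with `τ_H(H) = ℝ^{m-1} × {0}`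
    (B : Matrix (Fin m) (Fin m) ℝ) (b : Fin m → ℝ) (hB : IsUnit B)
    (himg : (fun x => B.mulVec x + b) '' H
      = {x | x ⟨m - 1, Nat.sub_lt hm Nat.one_pos⟩ = 0})
    -- (i): there is no `Q ∈ Π_{|H}` with `τ_H^* Q ≠ 0` vanishing on `P ∩ H`
    (hi : ¬ ∃ Q : MvPolynomial (Fin m) ℝ,
      (Q ∈ Pspace ∧ affinePullback B b Q ∈ Pspace ∧
        ∀ d ∈ (affinePullback B b Q).support, d ⟨m - 1, Nat.sub_lt hm Nat.one_pos⟩ = 0) ∧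
      affinePullback B b Q ≠ 0 ∧ ∀ x ∈ P ∩ H, eval x Q = 0)
    -- (ii): there is no nonzero `Q ∈ Π_{|H̄}` vanishing on `P \ H`
    (hii : ¬ ∃ Q : MvPolynomial (Fin m) ℝ,
      QH * Q ∈ Pspace ∧ Q ≠ 0 ∧ ∀ x ∈ P \ H, eval x Q = 0)
    -- the function to interpolate and the two partial interpolants
    (f : (Fin m → ℝ) → ℝ)
    (Q₁ : MvPolynomial (Fin m) ℝ)
    -- `Q₁ ∈ Π_{|H}`
    (hQ₁mem : Q₁ ∈ Pspace ∧ affinePullback B b Q₁ ∈ Pspace ∧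
      ∀ d ∈ (affinePullback B b Q₁).support, d ⟨m - 1, Nat.sub_lt hm Nat.one_pos⟩ = 0)
    (Q₂ : MvPolynomial (Fin m) ℝ)
    -- `Q₂ ∈ Π_{|H̄}`
    (hQ₂mem : QH * Q₂ ∈ Pspace)
    -- (i): `Q₁(p) = f(p)` for all `p ∈ P ∩ H`
    (hQ₁int : ∀ x ∈ P ∩ H, eval x Q₁ = f x)
    -- (ii): `Q₂(p) = (f(p) - Q₁(p))/Q_H(p)` for all `p ∈ P \ H`
    (hQ₂int : ∀ x ∈ P \ H, eval x Q₂ = (f x - eval x Q₁) / eval x QH) :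
    -- conclusion: `Q = Q₁ + Q_H·Q₂ ∈ Π` is the unique interpolant of `f` on `P` in `Π`
    Q₁ + QH * Q₂ ∈ Pspace ∧ (∀ x ∈ P, eval x (Q₁ + QH * Q₂) = f x) ∧
      ∀ Q' ∈ Pspace, (∀ x ∈ P, eval x Q' = f x) → Q' = Q₁ + QH * Q₂ :=
  interpolant_split_general m hm Pspace P QH hQHdeg H hH hcanon B b hB himg hi hii f Q₁ hQ₁mem Q₂
    hQ₂mem hQ₁int hQ₂int

end
end

section
/- Let m ∈ ℕ and A ⊆ ℕ^m be a complete set of multi-indices. Let GP = ⊕_{i=1}^m P_i be generating nodes, where each P_i = {p_{0,i},…,p_{n_i,i}} ⊆ ℝ is a set of n_i + 1 pairwise distinct reals with n_i = max_{α∈A} α_i. Then the node set P_A = { (p_{α_1,1},…,p_{α_m,m}) : α ∈ A } is unisolvent with respect to Π_A. -/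
/-!
The Newton polynomials `N_α`, `α ∈ A`, lie in `Π_A` because `A` is downward closed, and
`N_α(p_β) = 0` unless `α ≤ β` componentwise, while `N_α(p_α) ≠ 0` since the generating nodes
are distinct. This triangularity makes them linearly independent, so by counting dimensions they
form a basis of `Π_A`; a polynomial of `Π_A` vanishing on `P_A` then has Newton coefficients that
vanish one by one along a well-founded induction on `α`.
-/

open MvPolynomial
open scoped Classical

noncomputable section

/-- The polynomial space `Π_A` spanned by the monomials `x^α`, `α ∈ A`. -/
def PiA (m : ℕ) (A : Finset (Fin m → ℕ)) : Submodule ℝ (MvPolynomial (Fin m) ℝ) :=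
  Submodule.span ℝ ((fun α : Fin m → ℕ => ∏ i, X i ^ α i) '' ↑A)

/-- `A ⊆ ℕ^m` is a complete (downward closed) set of multi-indices. -/
def CompleteIdx {m : ℕ} (A : Finset (Fin m → ℕ)) : Prop :=
  ∀ α ∈ A, ∀ β : Fin m → ℕ, (∀ i, β i ≤ α i) → β ∈ A

/-- The node `p_α = (p_{α₁,1},…,p_{α_m,m})` generated from generating nodes `p`. -/
def node {m : ℕ} (p : Fin m → ℕ → ℝ) (α : Fin m → ℕ) : Fin m → ℝ := fun i => p i (α i)

/-- The generating nodes `p_{0,i},…,p_{n_i,i}`, `n_i = max_{α∈A} α_i`, are pairwise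
distinct in each dimension `i` (essential assumptions, Definition 2.8). -/
def GenDistinct {m : ℕ} (A : Finset (Fin m → ℕ)) (p : Fin m → ℕ → ℝ) : Prop :=
  ∀ i : Fin m, ∀ j k : ℕ, j ≤ A.sup (fun α => α i) → k ≤ A.sup (fun α => α i) →
    p i j = p i k → j = k

/-- The multivariate Newton polynomial `N_α(x) = ∏_i ∏_{j<α_i} (x_i - p_{j,i})`. -/
def newton {m : ℕ} (p : Fin m → ℕ → ℝ) (α : Fin m → ℕ) : MvPolynomial (Fin m) ℝ :=
  ∏ i, ∏ j ∈ Finset.range (α i), (X i - C (p i j))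

/-- `P` is unisolvent with respect to the polynomial subspace `W`: the only
polynomial in `W` vanishing on all of `P` is `0`. -/
def Unisolvent {m : ℕ} (P : Set (Fin m → ℝ)) (W : Submodule ℝ (MvPolynomial (Fin m) ℝ)) :
    Prop :=
  ∀ Q ∈ W, (∀ x ∈ P, eval x Q = 0) → Q = 0

theorem Finsupp.eq_zero_of_triangular {ι R M : Type*} [PartialOrder ι] [WellFoundedLT ι]
    [Semiring R] [NoZeroDivisors R] [AddCommMonoid M] [Module R M]
    {v : ι → M} {φ : ι → M →ₗ[R] R} {s : Set ι}
    (htri : ∀ α β, φ β (v α) ≠ 0 → α ≤ β) (hdiag : ∀ α ∈ s, φ α (v α) ≠ 0)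
    {l : ι →₀ R} (hl : l ∈ Finsupp.supported R R s)
    (hev : ∀ β ∈ s, φ β (Finsupp.linearCombination R v l) = 0) : l = 0 := by
  suffices h : ∀ β, l β = 0 from Finsupp.ext h
  intro β
  induction β using WellFoundedLT.induction with
  | _ β ih =>
    by_cases hβ : β ∈ s
    swap
    · exact Finsupp.notMem_support_iff.mp fun h => hβ (hl h)
    -- At `β`, a term `α ≠ β` dies by triangularity unless `α < β`, and then by induction.
    have hlower : ∀ α ∈ l.support, α ≠ β → l α * φ β (v α) = 0 := by
      intro α _ hne
      by_cases h : φ β (v α) = 0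
      · rw [h, mul_zero]
      · rw [ih α (lt_of_le_of_ne (htri α β h) hne), zero_mul]
    have hβeq := hev β hβ
    rw [Finsupp.linearCombination_apply, Finsupp.sum, map_sum] at hβeq
    simp only [map_smul, smul_eq_mul] at hβeq
    rw [Finset.sum_eq_single β hlower
      (fun h => by rw [Finsupp.notMem_support_iff.mp h, zero_mul])] at hβeq
    exact (mul_eq_zero.mp hβeq).resolve_right (hdiag β hβ)

section Newton

variable {m : ℕ}

theorem prod_X_pow_mem_PiA {A : Finset (Fin m → ℕ)} {α : Fin m → ℕ} (hα : α ∈ A) :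
    ∏ i, X i ^ α i ∈ PiA m A :=
  Submodule.subset_span ⟨α, hα, rfl⟩

theorem mem_PiA_of_support {A : Finset (Fin m → ℕ)} {Q : MvPolynomial (Fin m) ℝ}
    (hQ : ∀ d ∈ Q.support, ⇑d ∈ A) : Q ∈ PiA m A := by
  rw [Q.as_sum]
  refine Submodule.sum_mem _ fun d hd => ?_
  rw [monomial_eq, Finsupp.prod_fintype _ _ fun _ => pow_zero _, ← smul_eq_C_mul]
  exact Submodule.smul_mem _ _ (prod_X_pow_mem_PiA (hQ d hd))

theorem finrank_PiA_le (A : Finset (Fin m → ℕ)) : Module.finrank ℝ (PiA m A) ≤ A.card := by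
  rw [PiA, ← Finset.coe_image]
  exact (finrank_span_finset_le_card _).trans Finset.card_image_le

instance (A : Finset (Fin m → ℕ)) : FiniteDimensional ℝ (PiA m A) :=
  FiniteDimensional.span_of_finite ℝ (A.finite_toSet.image _)

theorem degreeOf_newton_le (p : Fin m → ℕ → ℝ) (α : Fin m → ℕ) (i : Fin m) :
    degreeOf i (newton p α) ≤ α i := by
  calc degreeOf i (newton p α)
      ≤ ∑ k, ∑ j ∈ Finset.range (α k), degreeOf i (X k - C (p k j) : MvPolynomial (Fin m) ℝ) :=
        (degreeOf_prod_le i _ _).trans <| Finset.sum_le_sum fun k _ => degreeOf_prod_le i _ _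
    _ ≤ ∑ k, ∑ _j ∈ Finset.range (α k), if i = k then 1 else 0 := by
        refine Finset.sum_le_sum fun k _ => Finset.sum_le_sum fun j _ => ?_
        refine (degreeOf_sub_le i _ _).trans ?_
        simp [degreeOf_X, degreeOf_C]
    _ = α i := by simp

theorem newton_mem_PiA {A : Finset (Fin m → ℕ)} (hA : CompleteIdx A) (p : Fin m → ℕ → ℝ)
    {α : Fin m → ℕ} (hα : α ∈ A) : newton p α ∈ PiA m A :=
  mem_PiA_of_support fun _ hd =>
    hA α hα _ fun i => (monomial_le_degreeOf i hd).trans (degreeOf_newton_le p α i)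

theorem eval_node_newton (p : Fin m → ℕ → ℝ) (α β : Fin m → ℕ) :
    eval (node p β) (newton p α) = ∏ i, ∏ j ∈ Finset.range (α i), (p i (β i) - p i j) := by
  simp [newton, node]

theorem le_of_eval_node_newton_ne_zero (p : Fin m → ℕ → ℝ) {α β : Fin m → ℕ}
    (h : eval (node p β) (newton p α) ≠ 0) : α ≤ β := by
  intro i
  by_contra! hi
  refine h ?_
  rw [eval_node_newton]
  exact Finset.prod_eq_zero (Finset.mem_univ i) <|
    Finset.prod_eq_zero (Finset.mem_range.mpr hi) (sub_self _)

theorem eval_node_newton_self_ne_zero {A : Finset (Fin m → ℕ)} {p : Fin m → ℕ → ℝ}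
    (hp : GenDistinct A p) {α : Fin m → ℕ} (hα : α ∈ A) :
    eval (node p α) (newton p α) ≠ 0 := by
  rw [eval_node_newton]
  refine Finset.prod_ne_zero_iff.mpr fun i _ => Finset.prod_ne_zero_iff.mpr fun j hj h0 => ?_
  have hαi : α i ≤ A.sup (fun α => α i) := Finset.le_sup (f := fun α => α i) hα
  have hj : j < α i := Finset.mem_range.mp hj
  have := hp i _ _ hαi (hj.le.trans hαi) (sub_eq_zero.mp h0)
  omega

theorem linearCombination_newton_eq_zero {A : Finset (Fin m → ℕ)} {p : Fin m → ℕ → ℝ}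
    (hp : GenDistinct A p) {l : (Fin m → ℕ) →₀ ℝ} (hl : l ∈ Finsupp.supported ℝ ℝ ↑A)
    (hev : ∀ β ∈ A, eval (node p β) (Finsupp.linearCombination ℝ (newton p) l) = 0) :
    l = 0 :=
  Finsupp.eq_zero_of_triangular (φ := fun β => (aeval (node p β)).toLinearMap)
    (fun _ _ h => le_of_eval_node_newton_ne_zero p h)
    (fun _ hα => eval_node_newton_self_ne_zero hp hα) hl hev

theorem span_newton_eq_PiA {A : Finset (Fin m → ℕ)} (hA : CompleteIdx A)
    {p : Fin m → ℕ → ℝ} (hp : GenDistinct A p) :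
    Submodule.span ℝ (newton p '' ↑A) = PiA m A := by
  have hle : Submodule.span ℝ (newton p '' ↑A) ≤ PiA m A :=
    Submodule.span_le.mpr <| Set.image_subset_iff.mpr fun _ hα => newton_mem_PiA hA p hα
  have hind : LinearIndepOn ℝ (newton p) ↑A :=
    linearIndepOn_iff.mpr fun l hl hl0 =>
      linearCombination_newton_eq_zero hp hl fun β _ => by rw [hl0, map_zero]
  refine Submodule.eq_of_le_of_finrank_le hle ((finrank_PiA_le A).trans_eq ?_)
  rw [Set.image_eq_range, finrank_span_eq_card hind]
  simp

end Newton

/-- For a complete set of multi-indices `A` and generating nodes with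
pairwise distinct entries, the node set `P_A = { (p_{α₁,1},…,p_{α_m,m}) : α ∈ A }`
is unisolvent with respect to `Π_A`. -/
theorem grid_unisolvent (m : ℕ) (A : Finset (Fin m → ℕ))
    (hA : CompleteIdx A) (p : Fin m → ℕ → ℝ) (hp : GenDistinct A p) :
    Unisolvent (node p '' ↑A) (PiA m A) := by
  intro Q hQ hvan
  rw [← span_newton_eq_PiA hA hp] at hQ
  obtain ⟨l, hl, rfl⟩ := (Finsupp.mem_span_image_iff_linearCombination ℝ).mp hQ
  rw [linearCombination_newton_eq_zero hp hl fun β hβ => hvan _ ⟨β, hβ, rfl⟩, map_zero]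

end
end

section
/- Let m ∈ ℕ, A ⊆ ℕ^m be a complete set of multi-indices, and let P_A be nodes generated per the essential assumptions. Then the set of multivariate Newton polynomials {N_α}_{α∈A} is a basis of the polynomial space Π_A. -/
/-
Ordering `ℕ^m` componentwise, `N_α = x^α + (monomials x^β with β < α)`: the Newton polynomials
are unitriangular with respect to the monomials. Since `A` is a lower set, the lower monomials
of `N_α` stay in `Π_A`, and well-founded induction on `α` recovers every `x^α`, `α ∈ A`, from
the `N_β`. As there are `|A| = dim Π_A` of them, they are also linearly independent.
-/

open MvPolynomial
open scoped Classical

noncomputable section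

namespace MvPolynomial

section CommSemiring

variable {R σ : Type*} [CommSemiring R]

theorem prod_univ_X_pow_eq_monomial [Fintype σ] (t : σ →₀ ℕ) :
    ∏ i, X i ^ t i = monomial t (1 : R) := by
  rw [monomial_eq, C_1, one_mul, Finsupp.prod_fintype _ _ (fun _ => pow_zero _)]

theorem restrictSupport_le_iff {s : Set (σ →₀ ℕ)} {W : Submodule R (MvPolynomial σ R)} :
    restrictSupport R s ≤ W ↔ ∀ t ∈ s, monomial t (1 : R) ∈ W := by
  rw [restrictSupport_eq_span, Submodule.span_le, Set.image_subset_iff]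
  rfl

end CommSemiring

variable {K σ : Type*} [Field K]

theorem monomial_mem_span_of_triangular {ι : Type*} {d : ι → σ →₀ ℕ}
    (hd : IsLowerSet (Set.range d)) {f : ι → MvPolynomial σ K}
    (hsupp : ∀ i, ∀ t ∈ (f i).support, t ≤ d i) (hcoeff : ∀ i, coeff (d i) (f i) ≠ 0)
    (t : σ →₀ ℕ) (ht : t ∈ Set.range d) :
    monomial t (1 : K) ∈ Submodule.span K (Set.range f) := by
  induction t using WellFoundedLT.induction with
  | _ t ih =>
  obtain ⟨i, rfl⟩ := ht
  set c := coeff (d i) (f i)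
  set g := f i - monomial (d i) c
  have hg : g ∈ restrictSupport K {t | t < d i} := by
    rw [mem_restrictSupport_iff]
    intro t ht
    have hne : coeff t g ≠ 0 := mem_support_iff.mp ht
    have htd : t ≠ d i := by rintro rfl; simp [g, c] at hne
    refine lt_of_le_of_ne (hsupp i t (mem_support_iff.mpr ?_)) htd
    simpa [g, coeff_monomial, Ne.symm htd] using hne
  have hgW : g ∈ Submodule.span K (Set.range f) :=
    restrictSupport_le_iff.mpr
      (fun t (ht : t < d i) => ih t ht (hd ht.le (Set.mem_range_self i))) hg
  have hmono : monomial (d i) c ∈ Submodule.span K (Set.range f) := by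
    have := Submodule.sub_mem _ (Submodule.subset_span (Set.mem_range_self i)) hgW
    simpa [g] using this
  have := Submodule.smul_mem _ c⁻¹ hmono
  rwa [smul_monomial, smul_eq_mul, inv_mul_cancel₀ (hcoeff i)] at this

theorem span_eq_restrictSupport_of_triangular {ι : Type*} {d : ι → σ →₀ ℕ}
    (hd : IsLowerSet (Set.range d)) {f : ι → MvPolynomial σ K}
    (hsupp : ∀ i, ∀ t ∈ (f i).support, t ≤ d i) (hcoeff : ∀ i, coeff (d i) (f i) ≠ 0) :
    Submodule.span K (Set.range f) = restrictSupport K (Set.range d) := by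
  refine le_antisymm ?_ (restrictSupport_le_iff.mpr
    (monomial_mem_span_of_triangular hd hsupp hcoeff))
  rw [Submodule.span_le]
  rintro _ ⟨i, rfl⟩ t ht
  exact hd (hsupp i t ht) (Set.mem_range_self i)

theorem linearIndependent_of_triangular {ι : Type*} [Fintype ι] {d : ι → σ →₀ ℕ}
    (hinj : Function.Injective d) (hd : IsLowerSet (Set.range d)) {f : ι → MvPolynomial σ K}
    (hsupp : ∀ i, ∀ t ∈ (f i).support, t ≤ d i) (hcoeff : ∀ i, coeff (d i) (f i) ≠ 0) :
    LinearIndependent K f := by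
  rw [linearIndependent_iff_card_eq_finrank_span, Set.finrank,
    span_eq_restrictSupport_of_triangular hd hsupp hcoeff,
    Module.finrank_eq_card_basis (basisRestrictSupport K (Set.range d)),
    Set.card_range_of_injective hinj]

end MvPolynomial

section Newton

variable {m : ℕ}

theorem PiA_eq_restrictSupport (A : Finset (Fin m → ℕ)) :
    PiA m A = restrictSupport ℝ (Set.range fun α : A => Finsupp.equivFunOnFinite.symm α.1) := by
  rw [PiA, restrictSupport_eq_span, Set.range_comp', Subtype.range_coe_subtype, Set.image_image]
  congr 2
  funext α
  exact prod_univ_X_pow_eq_monomial (Finsupp.equivFunOnFinite.symm α)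

theorem isLowerSet_range_of_completeIdx {A : Finset (Fin m → ℕ)} (hA : CompleteIdx A) :
    IsLowerSet (Set.range fun α : A => Finsupp.equivFunOnFinite.symm α.1) := by
  rintro _ s hst ⟨α, rfl⟩
  exact ⟨⟨s, hA α α.2 s hst⟩, Finsupp.equivFunOnFinite.symm_apply_apply s⟩

theorem support_newton_le (p : Fin m → ℕ → ℝ) (α : Fin m → ℕ) :
    ∀ s ∈ (newton p α).support, s ≤ Finsupp.equivFunOnFinite.symm α := by
  intro s hs
  have hfactor : ∀ i c, (X i - C c : MvPolynomial (Fin m) ℝ).degrees ≤ {i} := fun i c =>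
    degrees_sub_le.trans (by simp [degrees_C])
  have hdeg : (newton p α).degrees ≤ Finsupp.toMultiset (Finsupp.equivFunOnFinite.symm α) := calc
    (newton p α).degrees ≤ ∑ i, ∑ j ∈ Finset.range (α i), (X i - C (p i j)).degrees :=
      degrees_prod_le.trans (Finset.sum_le_sum fun i _ => degrees_prod_le)
    _ ≤ ∑ i, ∑ _j ∈ Finset.range (α i), ({i} : Multiset (Fin m)) :=
      by gcongr with i _ j _; exact hfactor i (p i j)
    _ = Finsupp.toMultiset (Finsupp.equivFunOnFinite.symm α) := by
      simp [Finsupp.toMultiset_apply, Finsupp.sum_fintype]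
  rw [← Finsupp.orderIsoMultiset.le_iff_le]
  refine le_trans ?_ hdeg
  rw [degrees_def]
  exact Finset.le_sup (f := Finsupp.toMultiset) hs

theorem coeff_newton_self (p : Fin m → ℕ → ℝ) (α : Fin m → ℕ) :
    coeff (Finsupp.equivFunOnFinite.symm α) (newton p α) = 1 := by
  let o : MonomialOrder (Fin m) := MonomialOrder.lex
  have hmonic : ∀ i, o.Monic (∏ j ∈ Finset.range (α i), (X i - C (p i j))) := fun i =>
    MonomialOrder.Monic.prod fun j _ => o.monic_X_sub_C i (p i j)
  have hdeg : o.degree (newton p α) = Finsupp.equivFunOnFinite.symm α := by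
    rw [newton, o.degree_prod fun i _ => (hmonic i).ne_zero]
    conv_rhs => rw [← Finsupp.univ_sum_single (Finsupp.equivFunOnFinite.symm α)]
    refine Finset.sum_congr rfl fun i _ => ?_
    rw [o.degree_prod fun j _ => (o.monic_X_sub_C i (p i j)).ne_zero]
    simp [o.degree_X_sub_C]
  rw [← hdeg]
  exact (MonomialOrder.Monic.prod fun i _ => hmonic i).coeff_degree

end Newton

theorem newton_basis_general (m : ℕ) (A : Finset (Fin m → ℕ))
    (hA : CompleteIdx A) (p : Fin m → ℕ → ℝ) :
    LinearIndependent ℝ (fun α : {α // α ∈ A} => newton p ↑α) ∧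
    Submodule.span ℝ (Set.range fun α : {α // α ∈ A} => newton p ↑α) = PiA m A := by
  have hinj : Function.Injective fun α : A => Finsupp.equivFunOnFinite.symm α.1 :=
    Finsupp.equivFunOnFinite.symm.injective.comp Subtype.val_injective
  have hlower := isLowerSet_range_of_completeIdx hA
  have hsupp : ∀ α : A, ∀ s ∈ (newton p α.1).support, s ≤ Finsupp.equivFunOnFinite.symm α.1 :=
    fun α => support_newton_le p α
  have hcoeff : ∀ α : A, coeff (Finsupp.equivFunOnFinite.symm α.1) (newton p α.1) ≠ 0 :=
    fun α => by simp [coeff_newton_self]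
  exact ⟨linearIndependent_of_triangular hinj hlower hsupp hcoeff,
    (span_eq_restrictSupport_of_triangular hlower hsupp hcoeff).trans
      (PiA_eq_restrictSupport A).symm⟩

/-- (Newton basis.) Under the essential assumptions, the multivariate
Newton polynomials `{N_α}_{α∈A}` form a basis of `Π_A`: they are linearly independent
and span `Π_A`. -/
theorem newton_basis (m : ℕ) (A : Finset (Fin m → ℕ))
    (hA : CompleteIdx A) (p : Fin m → ℕ → ℝ) (hp : GenDistinct A p) :
    LinearIndependent ℝ (fun α : {α // α ∈ A} => newton p ↑α) ∧
    Submodule.span ℝ (Set.range fun α : {α // α ∈ A} => newton p ↑α) = PiA m A :=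
  newton_basis_general m A hA p

end
end

section
/- Let m ∈ ℕ, A ⊆ ℕ^m be a complete set of multi-indices, and let P_A be nodes generated per the essential assumptions, with A enumerated by the lexicographic order ≤_L. Then the matrix NL_A = (N_β(p_α))_{α,β∈A} ∈ ℝ^{|A|×|A|} is lower triangular with respect to this enumeration (i.e., N_β(p_α) = 0 whenever α <_L β) and invertible, and for every function f : ℝ^m → ℝ the Newton coefficients C_Newt of the unique interpolant Q_{f,A} = Σ_{α∈A} c_α N_α satisfy NL_A · C_Newt = ( f(p_α) )_{α∈A}. -/
open MvPolynomial
open scoped Classical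

noncomputable section

/-- Lexicographic order `<_L` on multi-indices, comparing from the last coordinate
`x_m` down to the first `x_1`: at the highest coordinate where they differ, `α` is
smaller than `β`. -/
def lexLt {m : ℕ} (α β : Fin m → ℕ) : Prop :=
  ∃ k : Fin m, α k < β k ∧ ∀ j : Fin m, k < j → α j = β j

/-- Auxiliary: the lexicographic linear order on `Πₗ i : Fin m, ℕ`. -/
def lexPiOrd (m : ℕ) : LinearOrder (Πₗ _ : Fin m, ℕ) :=
  haveI : WellFoundedLT (Fin m) := Finite.to_wellFoundedLT
  inferInstance

/-- Auxiliary: the linear order on `Fin m → ℕ` given by `lexLt` (comparing from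
the last coordinate), obtained by pulling back the lexicographic order along
coordinate reversal. -/
def myLexOrd (m : ℕ) : LinearOrder (Fin m → ℕ) :=
  @LinearOrder.lift' _ _ (lexPiOrd m)
    (fun α => (toLex (fun i : Fin m => α i.rev) : Lex (Fin m → ℕ)))
    (by
      intro a b h
      funext i
      have := congrFun (congrArg ofLex h) i.rev
      simpa using this)

lemma myLexOrd_lt_iff {m : ℕ} (α β : Fin m → ℕ) :
    (myLexOrd m).lt α β ↔ lexLt α β := by
  have h1 : (myLexOrd m).lt α β ↔
      Pi.Lex (· < ·) (· < ·) (fun i : Fin m => α i.rev) (fun i : Fin m => β i.rev) :=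
    Iff.rfl
  rw [h1]
  unfold Pi.Lex
  constructor
  · rintro ⟨i, hji, hi⟩
    refine ⟨i.rev, hi, fun j hj => ?_⟩
    have := hji j.rev (by simpa using Fin.rev_lt_rev.mpr hj)
    simpa using this
  · rintro ⟨k, hk, hj⟩
    refine ⟨k.rev, fun j hjk => ?_, by simpa using hk⟩
    exact hj j.rev (by simpa using Fin.rev_lt_rev.mpr hjk)

lemma eval_newton {m : ℕ} (p : Fin m → ℕ → ℝ) (β : Fin m → ℕ) (x : Fin m → ℝ) :
    eval x (newton p β) = ∏ i, ∏ j ∈ Finset.range (β i), (x i - p i j) := by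
  simp [newton]

/-- The matrix `NL_A = (N_β(p_α))_{α,β∈A}` is lower triangular with
respect to the lexicographic order and invertible, and the Newton coefficients
`C_Newt` of the unique interpolant satisfy `NL_A · C_Newt = (f(p_α))_{α∈A}`. -/
theorem newton_lagrange_matrix (m : ℕ) (A : Finset (Fin m → ℕ))
    (hA : CompleteIdx A) (p : Fin m → ℕ → ℝ) (hp : GenDistinct A p)
    (f : (Fin m → ℝ) → ℝ) :
    (∀ α β : {α // α ∈ A}, lexLt (α : Fin m → ℕ) (β : Fin m → ℕ) →
      eval (node p ↑α) (newton p ↑β) = 0) ∧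
    IsUnit (Matrix.of fun α β : {α // α ∈ A} => eval (node p ↑α) (newton p ↑β)) ∧
    (∀ c : {α // α ∈ A} → ℝ,
      (∀ β : {α // α ∈ A},
        eval (node p ↑β) (∑ α ∈ A.attach, c α • newton p ↑α) = f (node p ↑β)) →
      (Matrix.of fun α β : {α // α ∈ A} => eval (node p ↑α) (newton p ↑β)).mulVec c
        = fun α : {α // α ∈ A} => f (node p ↑α)) := by
  -- Part 1: lower triangularity
  have part1 : ∀ α β : {α // α ∈ A}, lexLt (α : Fin m → ℕ) (β : Fin m → ℕ) →
      eval (node p ↑α) (newton p ↑β) = 0 := by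
    rintro α β ⟨k, hk, -⟩
    rw [eval_newton]
    refine Finset.prod_eq_zero (Finset.mem_univ k) ?_
    refine Finset.prod_eq_zero (Finset.mem_range.mpr hk) ?_
    simp [node]
  -- diagonal entries are nonzero
  have hdiag : ∀ α : {α // α ∈ A}, eval (node p ↑α) (newton p ↑α) ≠ 0 := by
    intro α
    rw [eval_newton]
    refine Finset.prod_ne_zero_iff.mpr fun i _ => ?_
    refine Finset.prod_ne_zero_iff.mpr fun j hj => ?_
    rw [Finset.mem_range] at hj
    have hle : (α : Fin m → ℕ) i ≤ A.sup (fun α => α i) :=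
      Finset.le_sup (f := fun α => α i) α.2
    intro h0
    have heq : p i ((α : Fin m → ℕ) i) = p i j := by
      have h1 : node p ↑α i = p i j := sub_eq_zero.mp h0
      simpa [node] using h1
    have h2 := hp i ((α : Fin m → ℕ) i) j hle (le_trans hj.le hle) heq
    rw [h2] at hj
    exact lt_irrefl _ hj
  refine ⟨part1, ?_, ?_⟩
  · -- invertibility via triangular determinant
    letI : LinearOrder {α // α ∈ A} := @Subtype.instLinearOrder _ (myLexOrd m) _
    set M : Matrix {α // α ∈ A} {α // α ∈ A} ℝ :=
      Matrix.of fun α β : {α // α ∈ A} => eval (node p ↑α) (newton p ↑β) with hM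
    have hdet : M.det = ∏ α : {α // α ∈ A}, M α α := by
      refine Matrix.det_of_lowerTriangular M ?_
      intro i j hij
      have hlt : (myLexOrd m).lt ↑i ↑j := hij
      exact part1 i j ((myLexOrd_lt_iff _ _).mp hlt)
    have hdet0 : M.det ≠ 0 := by
      rw [hdet]
      exact Finset.prod_ne_zero_iff.mpr fun α _ => hdiag α
    rw [Matrix.isUnit_iff_isUnit_det]
    exact isUnit_iff_ne_zero.mpr hdet0
  · -- the linear system for the Newton coefficients
    intro c hc
    funext α
    have h := hc α
    rw [map_sum] at h
    simp only [smul_eq_C_mul, map_mul, eval_C] at h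
    rw [Matrix.mulVec]
    simp only [dotProduct, Matrix.of_apply]
    rw [← h, Finset.univ_eq_attach]
    exact Finset.sum_congr rfl fun β _ => mul_comm _ _
end
end

section
/- Let m ∈ ℕ, A ⊆ ℕ^m be a complete set of multi-indices, and let P_A be nodes generated per the essential assumptions, with A enumerated by the lexicographic order ≤_L. Then the multivariate Vandermonde matrix V(P_A) = (p_α^β)_{α,β∈A} admits the LU-decomposition V(P_A) = NL_A · CN_A, where NL_A = (N_β(p_α))_{α,β∈A} is invertible lower triangular and CN_A is the invertible upper triangular matrix expressing the monomials x^β in the Newton basis, x^β = Σ_{α∈A} (CN_A)_{αβ} N_α. -/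
open MvPolynomial
open scoped Classical

noncomputable section

namespace VLU

variable {m : ℕ}

/-- Multi-index as a finitely supported function. -/
def idx (α : Fin m → ℕ) : Fin m →₀ ℕ := Finsupp.equivFunOnFinite.symm α

@[simp] lemma idx_apply (α : Fin m → ℕ) (i : Fin m) : idx α i = α i := rfl

@[simp] lemma coe_idx (α : Fin m → ℕ) : ⇑(idx α) = α := rfl

@[simp] lemma idx_coe (d : Fin m →₀ ℕ) : idx (⇑d) = d :=
  Finsupp.equivFunOnFinite_symm_coe d

lemma degreeOf_newton_le (p : Fin m → ℕ → ℝ) (α : Fin m → ℕ) (i : Fin m) :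
    degreeOf i (newton p α) ≤ α i := by
  unfold newton
  refine le_trans (degreeOf_prod_le i _ _) ?_
  have h : ∀ i' : Fin m,
      degreeOf i (∏ j ∈ Finset.range (α i'), (X i' - C (p i' j)) : MvPolynomial (Fin m) ℝ)
        ≤ if i = i' then α i' else 0 := by
    intro i'
    refine le_trans (degreeOf_prod_le i _ _) ?_
    have h1 : ∀ j ∈ Finset.range (α i'),
        degreeOf i (X i' - C (p i' j) : MvPolynomial (Fin m) ℝ) ≤ if i = i' then 1 else 0 :=
      fun j _ => le_trans (degreeOf_sub_le i _ _)
        (by rw [degreeOf_X, degreeOf_C]; exact le_of_eq (max_eq_left (Nat.zero_le _)))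
    refine le_trans (Finset.sum_le_sum h1) ?_
    rw [Finset.sum_const, Finset.card_range, smul_eq_mul]
    split_ifs <;> simp
  refine le_trans (Finset.sum_le_sum fun i' _ => h i') ?_
  simp

lemma coeff_newton_ne_zero {p : Fin m → ℕ → ℝ} {α : Fin m → ℕ} {d : Fin m →₀ ℕ}
    (hd : coeff d (newton p α) ≠ 0) (i : Fin m) : d i ≤ α i := by
  have hmem : d ∈ (newton p α).support := mem_support_iff.2 hd
  have h2 := degreeOf_newton_le p α i
  rw [degreeOf_eq_sup] at h2
  exact le_trans (Finset.le_sup (f := fun d : Fin m →₀ ℕ => d i) hmem) h2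

lemma coeff_newton_self (p : Fin m → ℕ → ℝ) :
    ∀ (n : ℕ) (α : Fin m → ℕ), (∑ i, α i) = n → coeff (idx α) (newton p α) = 1 := by
  intro n
  induction n using Nat.strong_induction_on with
  | _ n ih =>
  intro α hn
  by_cases h0 : ∀ i, α i = 0
  · have h1 : newton p α = 1 := by
      unfold newton
      refine Finset.prod_eq_one fun i _ => ?_
      rw [h0 i]
      simp
    have h2 : idx α = 0 := by
      ext i
      simp [h0 i]
    rw [h1, h2]
    simp
  · push_neg at h0
    obtain ⟨i, hi0⟩ := h0
    have hi : 0 < α i := Nat.pos_of_ne_zero hi0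
    set α' : Fin m → ℕ := Function.update α i (α i - 1) with hα'
    set c : ℝ := p i (α i - 1) with hc
    have key : newton p α = newton p α' * (X i - C c) := by
      unfold newton
      rw [← Finset.mul_prod_erase Finset.univ _ (Finset.mem_univ i),
          ← Finset.mul_prod_erase Finset.univ
            (fun i' => ∏ j ∈ Finset.range (α' i'), (X i' - C (p i' j))) (Finset.mem_univ i)]
      have h1 : ∀ i' ∈ Finset.univ.erase i,
          (∏ j ∈ Finset.range (α' i'), (X i' - C (p i' j)) : MvPolynomial (Fin m) ℝ)
            = ∏ j ∈ Finset.range (α i'), (X i' - C (p i' j)) := by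
        intro i' hi'
        rw [hα', Function.update_of_ne (Finset.ne_of_mem_erase hi')]
      rw [Finset.prod_congr rfl h1]
      have h3 : (∏ j ∈ Finset.range (α i), (X i - C (p i j)) : MvPolynomial (Fin m) ℝ)
          = (∏ j ∈ Finset.range (α i - 1), (X i - C (p i j))) * (X i - C c) := by
        conv_lhs => rw [show α i = (α i - 1) + 1 from (Nat.succ_pred_eq_of_pos hi).symm]
        rw [Finset.prod_range_succ, hc]
      rw [h3]
      have h4 : α' i = α i - 1 := by rw [hα', Function.update_self]
      rw [h4]
      ring
    have hne : coeff (idx α) (newton p α') = 0 := by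
      by_contra h
      have := coeff_newton_ne_zero h i
      rw [idx_apply, hα', Function.update_self] at this
      omega
    have hmemi : i ∈ (idx α).support := by
      rw [Finsupp.mem_support_iff, idx_apply]
      omega
    have hsub : idx α - Finsupp.single i 1 = idx α' := by
      ext j
      simp only [Finsupp.sub_apply, idx_apply, Finsupp.single_apply, hα']
      by_cases hji : j = i
      · subst hji
        simp [Function.update_self]
      · simp [Function.update_of_ne hji, Ne.symm hji]
    have hsum' : (∑ i', α' i') < n := by
      have e1 : ∑ i', α' i' = (α i - 1) + ∑ i' ∈ Finset.univ.erase i, α i' := by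
        rw [hα', Finset.sum_update_of_mem (Finset.mem_univ i), Finset.sdiff_singleton_eq_erase]
      have e2 : α i + ∑ i' ∈ Finset.univ.erase i, α i' = ∑ i', α i' :=
        Finset.add_sum_erase Finset.univ α (Finset.mem_univ i)
      omega
    have ihα' := ih _ hsum' α' rfl
    rw [key, mul_sub, coeff_sub, coeff_mul_X', if_pos hmemi, hsub, ihα',
        mul_comm (newton p α') (C c), coeff_C_mul, hne]
    ring

lemma sum_attach_coeff {W : Type*} [AddCommMonoid W] [Module ℝ W]
    (A : Finset (Fin m → ℕ)) (f : MvPolynomial (Fin m) ℝ)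
    (hf : ∀ d ∈ f.support, ⇑d ∈ A) (t : (Fin m → ℕ) → W) :
    ∑ d ∈ f.support, coeff d f • t ⇑d
      = ∑ γ ∈ A.attach, coeff (idx ↑γ) f • t ↑γ := by
  rw [Finset.sum_attach A (fun γ => coeff (idx γ) f • t γ)]
  have hinj : ∀ x ∈ f.support, ∀ y ∈ f.support,
      (⇑x : Fin m → ℕ) = ⇑y → x = y := by
    intro x _ y _ h
    rw [← idx_coe x, ← idx_coe y, h]
  have himg : f.support.image (fun d : Fin m →₀ ℕ => (⇑d : Fin m → ℕ)) ⊆ A := by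
    intro γ hγ
    obtain ⟨d, hd, rfl⟩ := Finset.mem_image.1 hγ
    exact hf d hd
  calc ∑ d ∈ f.support, coeff d f • t ⇑d
      = ∑ γ ∈ f.support.image (fun d : Fin m →₀ ℕ => (⇑d : Fin m → ℕ)),
          coeff (idx γ) f • t γ := by
        rw [Finset.sum_image hinj]
        exact Finset.sum_congr rfl fun d _ => by rw [idx_coe]
    _ = ∑ γ ∈ A, coeff (idx γ) f • t γ := by
        refine Finset.sum_subset himg fun γ _ hγ => ?_
        have hz : coeff (idx γ) f = 0 := by
          by_contra h
          exact hγ (Finset.mem_image.2 ⟨idx γ, mem_support_iff.2 h, by simp⟩)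
        rw [hz, zero_smul]

lemma newton_support_mem {A : Finset (Fin m → ℕ)} (hA : CompleteIdx A)
    (p : Fin m → ℕ → ℝ) {β : Fin m → ℕ} (hβ : β ∈ A) :
    ∀ d ∈ (newton p β).support, (⇑d : Fin m → ℕ) ∈ A := by
  intro d hd
  exact hA β hβ ⇑d fun i => coeff_newton_ne_zero (mem_support_iff.1 hd) i

lemma newton_eq_sum {A : Finset (Fin m → ℕ)} (hA : CompleteIdx A)
    (p : Fin m → ℕ → ℝ) {β : Fin m → ℕ} (hβ : β ∈ A) :
    newton p β = ∑ γ ∈ A.attach,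
      coeff (idx ↑γ) (newton p β) • ∏ i, (X i : MvPolynomial (Fin m) ℝ) ^ (↑γ : Fin m → ℕ) i := by
  conv_lhs => rw [as_sum (newton p β)]
  rw [← sum_attach_coeff A (newton p β) (newton_support_mem hA p hβ)
      (fun γ => ∏ i, (X i : MvPolynomial (Fin m) ℝ) ^ γ i)]
  refine Finset.sum_congr rfl fun d _ => ?_
  rw [monomial_eq, smul_eq_C_mul]
  congr 1
  rw [Finsupp.prod]
  refine Finset.prod_subset (Finset.subset_univ _) fun i _ hi => ?_
  rw [Finsupp.notMem_support_iff.1 hi, pow_zero]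

lemma eval_newton {A : Finset (Fin m → ℕ)} (hA : CompleteIdx A)
    (p : Fin m → ℕ → ℝ) {β : Fin m → ℕ} (hβ : β ∈ A) (x : Fin m → ℝ) :
    eval x (newton p β) = ∑ γ ∈ A.attach,
      coeff (idx ↑γ) (newton p β) * ∏ i, x i ^ (↑γ : Fin m → ℕ) i := by
  rw [eval_eq']
  have := sum_attach_coeff A (newton p β) (newton_support_mem hA p hβ)
      (fun γ => ∏ i, x i ^ γ i)
  simpa [smul_eq_mul] using this

lemma lexLt_iff {α β : Fin m → ℕ} :
    lexLt α β ↔ toLex (fun i => α (Fin.rev i)) < toLex (fun i => β (Fin.rev i)) := by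
  show lexLt α β ↔ Pi.Lex (· < ·) (· < ·) (fun i => α (Fin.rev i)) (fun i => β (Fin.rev i))
  constructor
  · rintro ⟨k, hk, hj⟩
    refine ⟨Fin.rev k, fun j hj' => ?_, ?_⟩
    · apply hj
      have h5 : Fin.rev (Fin.rev k) < Fin.rev j := Fin.rev_lt_rev.mpr hj'
      simpa using h5
    · show α (Fin.rev (Fin.rev k)) < β (Fin.rev (Fin.rev k))
      simpa using hk
  · rintro ⟨i, h1, h2⟩
    refine ⟨Fin.rev i, by simpa using h2, fun j hj => ?_⟩
    have h3 : Fin.rev j < i := by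
      have h4 : Fin.rev j < Fin.rev (Fin.rev i) := Fin.rev_lt_rev.mpr hj
      simpa using h4
    simpa using h1 (Fin.rev j) h3

lemma det_triangular {S : Type*} [Fintype S] [DecidableEq S] {o : Type*} [LinearOrder o]
    {M : Matrix S S ℝ} {b : S → o} (hb : Function.Injective b)
    (h : M.BlockTriangular b) : M.det = ∏ k, M k k := by
  rw [h.det, Finset.prod_image (fun x _ y _ hxy => hb hxy)]
  refine Finset.prod_congr rfl fun k _ => ?_
  haveI : Unique {a // b a = b k} := ⟨⟨⟨k, rfl⟩⟩, fun a => Subtype.ext (hb a.2)⟩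
  have hd : (default : {a // b a = b k}) = ⟨k, rfl⟩ := Subsingleton.elim _ _
  rw [Matrix.det_unique, hd, Matrix.toSquareBlock_def]
  rfl

end VLU

open VLU

/-- (LU-decomposition of the multivariate Vandermonde matrix.)
`V(P_A) = (p_α^β)_{α,β∈A}` factors as `V(P_A) = NL_A · CN_A` with `NL_A = (N_β(p_α))`
invertible lower triangular and `CN_A` the invertible upper triangular matrix
expressing the monomials in the Newton basis. -/
theorem vandermonde_LU (m : ℕ) (A : Finset (Fin m → ℕ))
    (hA : CompleteIdx A) (p : Fin m → ℕ → ℝ) (hp : GenDistinct A p) :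
    ∃ NL CN : Matrix {α // α ∈ A} {α // α ∈ A} ℝ,
      NL = (Matrix.of fun α β : {α // α ∈ A} => eval (node p ↑α) (newton p ↑β)) ∧
      (∀ α β : {α // α ∈ A}, lexLt (α : Fin m → ℕ) (β : Fin m → ℕ) → NL α β = 0) ∧
      IsUnit NL ∧
      (∀ α β : {α // α ∈ A}, lexLt (β : Fin m → ℕ) (α : Fin m → ℕ) → CN α β = 0) ∧
      IsUnit CN ∧
      (∀ β : {α // α ∈ A},
        (∏ i, X i ^ (β : Fin m → ℕ) i) = ∑ α ∈ A.attach, CN α β • newton p ↑α) ∧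
      (Matrix.of fun α β : {α // α ∈ A} =>
        ∏ i, node p (↑α) i ^ (β : Fin m → ℕ) i) = NL * CN := by
  classical
  letI : WellFoundedLT (Fin m) := inferInstance
  letI : LinearOrder (Lex (Fin m → ℕ)) := inferInstance
  let S := {α // α ∈ A}
  let b : S → Lex (Fin m → ℕ) := fun α => toLex (fun i => (α : Fin m → ℕ) (Fin.rev i))
  have hbinj : Function.Injective b := by
    intro x y hxy
    apply Subtype.ext
    funext i
    have h := congrFun (toLex.injective hxy) (Fin.rev i)
    simpa [Fin.rev_rev] using h
  let NL : Matrix S S ℝ := Matrix.of fun α β : S => eval (node p ↑α) (newton p ↑β)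
  let M : Matrix S S ℝ := fun α β : S => coeff (idx ↑β) (newton p ↑α)
  let CN : Matrix S S ℝ := (M.transpose)⁻¹
  -- triangularity of NL
  have hNLtri : ∀ α β : S, lexLt (↑α : Fin m → ℕ) ↑β → NL α β = 0 := by
    rintro α β ⟨k, hk, -⟩
    show eval (node p ↑α) (newton p ↑β) = 0
    unfold newton
    rw [map_prod]
    refine Finset.prod_eq_zero (Finset.mem_univ k) ?_
    rw [map_prod]
    refine Finset.prod_eq_zero (Finset.mem_range.2 hk) ?_
    simp [node]
  -- nonzero diagonal of NL
  have hNLdiag : ∀ α : S, NL α α ≠ 0 := by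
    intro α
    show eval (node p ↑α) (newton p ↑α) ≠ 0
    unfold newton
    rw [map_prod, Finset.prod_ne_zero_iff]
    intro i _
    rw [map_prod, Finset.prod_ne_zero_iff]
    intro j hj
    rw [map_sub, eval_X, eval_C, sub_ne_zero]
    intro heq
    have hj' : j < (↑α : Fin m → ℕ) i := Finset.mem_range.1 hj
    have hαi : (↑α : Fin m → ℕ) i ≤ A.sup fun γ => γ i :=
      Finset.le_sup (f := fun γ : Fin m → ℕ => γ i) α.2
    have hji := hp i ((↑α : Fin m → ℕ) i) j hαi (le_trans (le_of_lt hj') hαi) heq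
    exact absurd (hji ▸ hj') (lt_irrefl j)
  -- triangularity of M
  have hMtri : ∀ α β : S, lexLt (↑α : Fin m → ℕ) ↑β → M α β = 0 := by
    rintro α β ⟨k, hk, -⟩
    by_contra h
    have hle := coeff_newton_ne_zero h k
    rw [idx_apply] at hle
    exact absurd hle (not_le.2 hk)
  have hMdiag : ∀ α : S, M α α = 1 := fun α => coeff_newton_self p _ ↑α rfl
  -- block triangularity
  have hNLTbt : (NL.transpose).BlockTriangular b := by
    intro x y hxy
    show NL y x = 0
    exact hNLtri y x (lexLt_iff.2 hxy)
  have hMTbt : (M.transpose).BlockTriangular b := by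
    intro x y hxy
    show M y x = 0
    exact hMtri y x (lexLt_iff.2 hxy)
  -- determinants
  have hNLdet : NL.det = ∏ k, NL k k := by
    rw [← Matrix.det_transpose, det_triangular hbinj (by exact hNLTbt)]
    exact Finset.prod_congr rfl fun k _ => rfl
  have hNLunit : IsUnit NL := by
    rw [Matrix.isUnit_iff_isUnit_det, hNLdet, isUnit_iff_ne_zero]
    exact Finset.prod_ne_zero_iff.2 fun k _ => hNLdiag k
  have hMTdet : (M.transpose).det = 1 := by
    rw [det_triangular hbinj (by exact hMTbt)]
    exact Finset.prod_eq_one fun k _ => hMdiag k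
  have hMT : IsUnit (M.transpose).det := by rw [hMTdet]; exact isUnit_one
  haveI : Invertible M.transpose := M.transpose.invertibleOfIsUnitDet hMT
  have hCNbt : CN.BlockTriangular b := by
    exact Matrix.blockTriangular_inv_of_blockTriangular (by exact hMTbt)
  have hCNtri : ∀ α β : S, lexLt (↑β : Fin m → ℕ) ↑α → CN α β = 0 := by
    intro α β h
    exact hCNbt (lexLt_iff.1 h)
  have hCNunit : IsUnit CN := by
    rw [Matrix.isUnit_iff_isUnit_det, Matrix.det_nonsing_inv, hMTdet, Ring.inverse_one]
    exact isUnit_one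
  -- V = NL * CN
  have key : NL = (Matrix.of fun α β : S =>
      ∏ i, node p (↑α) i ^ (↑β : Fin m → ℕ) i) * M.transpose := by
    ext α β
    show eval (node p ↑α) (newton p ↑β)
      = ∑ γ : S, (∏ i, node p (↑α) i ^ (↑γ : Fin m → ℕ) i) * coeff (idx ↑γ) (newton p ↑β)
    rw [eval_newton hA p β.2 (node p ↑α), Finset.univ_eq_attach]
    exact Finset.sum_congr rfl fun γ _ => mul_comm _ _
  have hV : (Matrix.of fun α β : S =>
      ∏ i, node p (↑α) i ^ (↑β : Fin m → ℕ) i) = NL * CN := by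
    rw [key, Matrix.mul_nonsing_inv_cancel_right _ _ hMT]
  -- monomial expansion
  have hexp : ∀ β : S, (∏ i, (X i : MvPolynomial (Fin m) ℝ) ^ (↑β : Fin m → ℕ) i)
      = ∑ α ∈ A.attach, CN α β • newton p ↑α := by
    intro β
    have hMN : ∀ α : S, newton p (↑α : Fin m → ℕ) = ∑ γ ∈ A.attach,
        M α γ • ∏ i, (X i : MvPolynomial (Fin m) ℝ) ^ (↑γ : Fin m → ℕ) i :=
      fun α => newton_eq_sum hA p α.2
    have calc1 : ∑ α ∈ A.attach, CN α β • newton p (↑α : Fin m → ℕ)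
        = ∏ i, (X i : MvPolynomial (Fin m) ℝ) ^ (↑β : Fin m → ℕ) i := by
      calc ∑ α ∈ A.attach, CN α β • newton p (↑α : Fin m → ℕ)
          = ∑ α ∈ A.attach, ∑ γ ∈ A.attach,
              (CN α β * M α γ) • ∏ i, (X i : MvPolynomial (Fin m) ℝ) ^ (↑γ : Fin m → ℕ) i := by
            refine Finset.sum_congr rfl fun α _ => ?_
            rw [hMN α, Finset.smul_sum]
            exact Finset.sum_congr rfl fun γ _ => by rw [smul_smul]
        _ = ∑ γ ∈ A.attach, (∑ α ∈ A.attach, M.transpose γ α * CN α β) •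
              ∏ i, (X i : MvPolynomial (Fin m) ℝ) ^ (↑γ : Fin m → ℕ) i := by
            rw [Finset.sum_comm]
            refine Finset.sum_congr rfl fun γ _ => ?_
            rw [Finset.sum_smul]
            exact Finset.sum_congr rfl fun α _ => by
              rw [Matrix.transpose_apply, mul_comm]
        _ = ∑ γ ∈ A.attach, ((1 : Matrix S S ℝ) γ β) •
              ∏ i, (X i : MvPolynomial (Fin m) ℝ) ^ (↑γ : Fin m → ℕ) i := by
            refine Finset.sum_congr rfl fun γ _ => ?_
            have h1 : (M.transpose * CN) γ β = ∑ α ∈ A.attach, M.transpose γ α * CN α β := by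
              rw [Matrix.mul_apply, Finset.univ_eq_attach]
            rw [← h1, Matrix.mul_nonsing_inv _ hMT]
        _ = ∏ i, (X i : MvPolynomial (Fin m) ℝ) ^ (↑β : Fin m → ℕ) i := by
            rw [Finset.sum_eq_single β
              (fun γ _ hγ => by rw [Matrix.one_apply_ne hγ, zero_smul])
              (fun h => absurd (A.mem_attach β) h)]
            rw [Matrix.one_apply_eq, one_smul]
    exact calc1.symm
  exact ⟨NL, CN, rfl, hNLtri, hNLunit, hCNtri, hCNunit, hexp, hV⟩

end
end

section
/- Let m, k ∈ ℕ with k ≥ 1 and let P ⊆ ℝ^m be any set of cardinality k. Then there exists a k-dimensional polynomial subspace Π_P of Π_{m,k,∞} (the space of polynomials of l_∞-degree at most k) such that P is unisolvent with respect to Π_P; in fact there is a basis B_1,…,B_k of Π_P with B_i(p_j) = δ_{ij} for an enumeration P = {p_1,…,p_k}. -/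
open MvPolynomial
open scoped Classical

noncomputable section

/-- `Π_{m,n,∞}`: the span of the monomials `x^α` with `max_i α_i ≤ n`. -/
def PiInfty (m n : ℕ) : Submodule ℝ (MvPolynomial (Fin m) ℝ) :=
  Submodule.span ℝ
    ((fun α : Fin m → ℕ => ∏ i, X i ^ α i) '' {α : Fin m → ℕ | ∀ i, α i ≤ n})

lemma mem_PiInfty_of_totalDegree_le {m n : ℕ} {p : MvPolynomial (Fin m) ℝ}
    (h : p.totalDegree ≤ n) : p ∈ PiInfty m n := by
  rw [p.as_sum]
  refine Submodule.sum_mem _ fun d hd => ?_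
  have hmono : (monomial d) (coeff d p) = (coeff d p) • ∏ i, X i ^ d i := by
    rw [monomial_eq, smul_eq_C_mul]
    congr 1
    rw [Finsupp.prod_fintype]
    intro i; exact pow_zero _
  rw [hmono]
  refine Submodule.smul_mem _ _ (Submodule.subset_span ?_)
  refine ⟨fun i => d i, fun i => ?_, rfl⟩
  calc d i ≤ d.sum fun _ e => e := by
        by_cases hdi : d i = 0
        · simp [hdi]
        · exact Finset.single_le_sum (fun _ _ => Nat.zero_le _)
            (Finsupp.mem_support_iff.mpr hdi)
    _ ≤ p.totalDegree := le_totalDegree hd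
    _ ≤ n := h

/-- (Dual notion of unisolvence.) For any set `P ⊆ ℝ^m` of
cardinality `k ≥ 1` there exists a `k`-dimensional subspace `Π_P ⊆ Π_{m,k,∞}` with
respect to which `P` is unisolvent; in fact there is a basis `B_1,…,B_k` of `Π_P`
with `B_i(p_j) = δ_{ij}`. -/
theorem dual_unisolvence (m k : ℕ) (hk : 1 ≤ k)
    (pt : Fin k → (Fin m → ℝ)) (hpt : Function.Injective pt) :
    ∃ B : Fin k → MvPolynomial (Fin m) ℝ,
      (∀ i, B i ∈ PiInfty m k) ∧
      (∀ i j, eval (pt j) (B i) = if i = j then 1 else 0) ∧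
      LinearIndependent ℝ B ∧
      Module.finrank ℝ ↥(Submodule.span ℝ (Set.range B)) = k ∧
      Unisolvent (Set.range pt) (Submodule.span ℝ (Set.range B)) := by
  set N : Fin k → Fin k → MvPolynomial (Fin m) ℝ := fun i j =>
    if h : pt i ≠ pt j then
      (pt i (Classical.choose (Function.ne_iff.mp h)) -
        pt j (Classical.choose (Function.ne_iff.mp h)))⁻¹ •
        (X (Classical.choose (Function.ne_iff.mp h)) -
          C (pt j (Classical.choose (Function.ne_iff.mp h)))) else 1 with hN
  have hNdeg : ∀ i j, (N i j).totalDegree ≤ 1 := by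
    intro i j
    by_cases h : pt i ≠ pt j
    · simp only [hN, dif_pos h]
      refine le_trans (totalDegree_smul_le _ _) ?_
      rw [sub_eq_add_neg]
      refine le_trans (totalDegree_add _ _) ?_
      simp [totalDegree_X]
    · simp only [hN]
      rw [dif_neg h]
      simp
  have hNi : ∀ i j, i ≠ j → eval (pt i) (N i j) = 1 := by
    intro i j hij
    have h : pt i ≠ pt j := fun he => hij (hpt he)
    have hc := Classical.choose_spec (Function.ne_iff.mp h)
    simp only [hN, dif_pos h, smul_eval, map_sub, eval_X, eval_C]
    exact inv_mul_cancel₀ (sub_ne_zero_of_ne hc)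
  have hNj : ∀ i j, i ≠ j → eval (pt j) (N i j) = 0 := by
    intro i j hij
    have h : pt i ≠ pt j := fun he => hij (hpt he)
    simp only [hN]
    rw [dif_pos h]
    simp [smul_eval]
  set B : Fin k → MvPolynomial (Fin m) ℝ := fun i =>
    ∏ j ∈ Finset.univ.erase i, N i j with hB
  have hBeval : ∀ i j, eval (pt j) (B i) = if i = j then 1 else 0 := by
    intro i j
    rw [hB]
    simp only [map_prod]
    by_cases hij : i = j
    · subst hij
      rw [if_pos rfl]
      refine Finset.prod_eq_one fun l hl => ?_
      exact hNi i l (fun he => (Finset.mem_erase.mp hl).1 he.symm)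
    · rw [if_neg hij]
      refine Finset.prod_eq_zero (Finset.mem_erase.mpr ⟨fun he => hij he.symm,
        Finset.mem_univ j⟩) ?_
      exact hNj i j hij
  have hBmem : ∀ i, B i ∈ PiInfty m k := by
    intro i
    refine mem_PiInfty_of_totalDegree_le ?_
    calc (B i).totalDegree ≤ ∑ j ∈ Finset.univ.erase i, (N i j).totalDegree :=
          totalDegree_finset_prod _ _
      _ ≤ ∑ j ∈ Finset.univ.erase i, 1 :=
          Finset.sum_le_sum fun j _ => hNdeg i j
      _ ≤ k := by
          simp only [Finset.sum_const, smul_eq_mul, mul_one,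
            Finset.card_erase_of_mem (Finset.mem_univ i), Finset.card_univ,
            Fintype.card_fin]
          omega
  have hli : LinearIndependent ℝ B := by
    rw [Fintype.linearIndependent_iff]
    intro g hg j
    have := congrArg (eval (pt j)) hg
    simp only [map_sum, smul_eval, map_zero] at this
    simpa [hBeval, Finset.sum_ite_eq'] using this
  refine ⟨B, hBmem, hBeval, hli, ?_, ?_⟩
  · rw [finrank_span_eq_card hli, Fintype.card_fin]
  · intro Q hQ hQ0
    rw [Submodule.mem_span_range_iff_exists_fun] at hQ
    obtain ⟨c, rfl⟩ := hQ
    have hc : ∀ j, c j = 0 := by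
      intro j
      have := hQ0 (pt j) ⟨j, rfl⟩
      simp only [map_sum, smul_eval] at this
      simpa [hBeval, Finset.sum_ite_eq'] using this
    simp [hc]

end
end

section
/- Let m ∈ ℕ, A ⊆ ℕ^m be a complete set of multi-indices, let P_A ⊆ Ω = [−1,1]^m be nodes generated per the essential assumptions with generating nodes in [−1,1], and let P̄_A ⊆ Ω be any node set of cardinality |A| unisolvent with respect to Π_A. Let S_A be the inverse of the matrix R_A = (L_β(p̄_α))_{α,β∈A}, where L_α are the Lagrange polynomials of P_A. Then the Lebesgue functions satisfy Λ(P̄_A) ≤ ‖S_A‖_∞ · Λ(P_A) and Λ(P_A) ≤ ‖S_A^{-1}‖_∞ · Λ(P̄_A), where ‖·‖_∞ denotes the matrix norm induced by the maximum norm. -/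
open MvPolynomial
open scoped Classical

noncomputable section

/-- The hypercube `Ω = [-1,1]^m`. -/
def Omega (m : ℕ) : Set (Fin m → ℝ) := {x | ∀ i, |x i| ≤ 1}

/-- The matrix norm induced by the maximum norm: the maximal absolute row sum. -/
def matNormInf {I : Type*} [Fintype I] (M : Matrix I I ℝ) : ℝ :=
  ⨆ α : I, ∑ β : I, |M α β|

/-- The Lebesgue function `Λ = ‖Σ_{α∈A} |L_α|‖_{C⁰(Ω)}` of a node set with Lagrange
polynomials `L_α`. -/
def lebesgueFn (m : ℕ) (A : Finset (Fin m → ℕ))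
    (L : {α // α ∈ A} → MvPolynomial (Fin m) ℝ) : ℝ :=
  ⨆ x : (Omega m), ∑ α ∈ A.attach, |eval (↑x) (L α)|


section AuxLemmas

variable {m : ℕ} {A : Finset (Fin m → ℕ)}

/-- Evaluation at a family of points, as a linear map on `Π_A`. -/
def evalMapAux (q : {α // α ∈ A} → (Fin m → ℝ)) :
    PiA m A →ₗ[ℝ] ({α // α ∈ A} → ℝ) where
  toFun Q := fun α => eval (q α) Q.1
  map_add' Q₁ Q₂ := by funext α; simp
  map_smul' c Q := by funext α; simp [smul_eval]

lemma delta_sum_aux (q : {α // α ∈ A} → (Fin m → ℝ))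
    (L : {α // α ∈ A} → MvPolynomial (Fin m) ℝ)
    (hLdelta : ∀ α β, eval (q β) (L α) = if α = β then 1 else 0)
    (c : {α // α ∈ A} → ℝ) (β : {α // α ∈ A}) :
    eval (q β) (∑ α : {α // α ∈ A}, c α • L α) = c β := by
  rw [map_sum]
  have h : ∀ α : {α // α ∈ A}, eval (q β) (c α • L α) = if α = β then c α else 0 := by
    intro α
    rw [smul_eval, hLdelta]
    by_cases h : α = β <;> simp [h]
  rw [Finset.sum_congr rfl fun α _ => h α,
    Finset.sum_ite_eq' Finset.univ β (fun α => c α)]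
  simp

/-- Lagrange-type representation of any element of `Π_A`, given injectivity of
evaluation at the nodes. -/
lemma repr_eq_aux (q : {α // α ∈ A} → (Fin m → ℝ))
    (L : {α // α ∈ A} → MvPolynomial (Fin m) ℝ)
    (hLmem : ∀ α, L α ∈ PiA m A)
    (hLdelta : ∀ α β, eval (q β) (L α) = if α = β then 1 else 0)
    (hinj : ∀ Q ∈ PiA m A, (∀ α, eval (q α) Q = 0) → Q = 0)
    (Q : MvPolynomial (Fin m) ℝ) (hQ : Q ∈ PiA m A) :
    Q = ∑ α : {α // α ∈ A}, (eval (q α) Q) • L α := by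
  have hD : Q - ∑ α : {α // α ∈ A}, (eval (q α) Q) • L α ∈ PiA m A :=
    Submodule.sub_mem _ hQ
      (Submodule.sum_mem _ fun α _ => Submodule.smul_mem _ _ (hLmem α))
  have h0 : ∀ β, eval (q β) (Q - ∑ α : {α // α ∈ A}, (eval (q α) Q) • L α) = 0 := by
    intro β
    rw [map_sub, delta_sum_aux q L hLdelta, sub_self]
  exact sub_eq_zero.mp (hinj _ hD h0)

set_option synthInstance.maxHeartbeats 1000000 in
/-- The evaluation map is injective on `Π_A` at any nodes admitting Lagrange
polynomials (dimension argument). -/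
lemma gen_inj_aux (q : {α // α ∈ A} → (Fin m → ℝ))
    (L : {α // α ∈ A} → MvPolynomial (Fin m) ℝ)
    (hLmem : ∀ α, L α ∈ PiA m A)
    (hLdelta : ∀ α β, eval (q β) (L α) = if α = β then 1 else 0) :
    ∀ Q ∈ PiA m A, (∀ α, eval (q α) Q = 0) → Q = 0 := by
  haveI hfd : FiniteDimensional ℝ (PiA m A) :=
    FiniteDimensional.span_of_finite ℝ (Set.Finite.image _ (A.finite_toSet))
  have hsurj : Function.Surjective (evalMapAux q) := by
    intro v
    refine ⟨⟨∑ α : {α // α ∈ A}, v α • L α,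
      Submodule.sum_mem _ fun α _ => Submodule.smul_mem _ _ (hLmem α)⟩, ?_⟩
    funext β
    exact delta_sum_aux q L hLdelta v β
  have hcard : Module.finrank ℝ ({α // α ∈ A} → ℝ) = Fintype.card {α // α ∈ A} :=
    Module.finrank_fintype_fun_eq_card ℝ
  have h1 : Module.finrank ℝ (PiA m A) ≤ A.card := by
    have hspan : PiA m A
        = Submodule.span ℝ
            ↑(A.image (fun α : Fin m → ℕ => (∏ i, X i ^ α i : MvPolynomial (Fin m) ℝ))) := by
      rw [PiA, Finset.coe_image]
    calc Module.finrank ℝ (PiA m A)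
        ≤ (A.image (fun α : Fin m → ℕ => (∏ i, X i ^ α i : MvPolynomial (Fin m) ℝ))).card := by
          rw [hspan]; exact finrank_span_finset_le_card _
      _ ≤ A.card := Finset.card_image_le
  have hrn := LinearMap.finrank_range_add_finrank_ker (evalMapAux q)
  have hr : LinearMap.range (evalMapAux q) = ⊤ := LinearMap.range_eq_top.mpr hsurj
  rw [hr, finrank_top, hcard, Fintype.card_coe] at hrn
  have hz : Module.finrank ℝ (LinearMap.ker (evalMapAux q)) = 0 := by omega
  have hker : LinearMap.ker (evalMapAux q) = ⊥ := Submodule.finrank_eq_zero.mp hz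
  intro Q hQ h0
  have hmem : (⟨Q, hQ⟩ : PiA m A) ∈ LinearMap.ker (evalMapAux q) := by
    rw [LinearMap.mem_ker]
    funext α
    exact h0 α
  rw [hker, Submodule.mem_bot] at hmem
  exact congrArg Subtype.val hmem

instance omega_nonempty' (m : ℕ) : Nonempty (Omega m) :=
  ⟨⟨fun _ => 0, fun i => by simp⟩⟩

lemma omega_compact (m : ℕ) : IsCompact (Omega m) := by
  have : Omega m = Set.pi Set.univ (fun _ : Fin m => Set.Icc (-1 : ℝ) 1) := by
    ext x
    simp only [Omega, Set.mem_setOf_eq, Set.mem_univ_pi, Set.mem_Icc, abs_le]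
  rw [this]
  exact isCompact_univ_pi fun _ => isCompact_Icc

lemma bddAbove_sum_abs (L : {α // α ∈ A} → MvPolynomial (Fin m) ℝ) :
    BddAbove (Set.range fun x : Omega m => ∑ α ∈ A.attach, |eval (↑x) (L α)|) := by
  have hcont : Continuous (fun x : Fin m → ℝ => ∑ α ∈ A.attach, |eval x (L α)|) :=
    continuous_finset_sum _ fun α _ => ((L α).continuous_eval).abs
  have := ((omega_compact m).image hcont).bddAbove
  rwa [Set.image_eq_range] at this

lemma sup_le_mul_sup (L L' : {α // α ∈ A} → MvPolynomial (Fin m) ℝ) (c : ℝ) (hc : 0 ≤ c)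
    (h : ∀ x : Omega m, ∑ α ∈ A.attach, |eval (↑x) (L α)|
      ≤ c * ∑ α ∈ A.attach, |eval (↑x) (L' α)|) :
    lebesgueFn m A L ≤ c * lebesgueFn m A L' := by
  unfold lebesgueFn
  refine ciSup_le fun x => ?_
  refine le_trans (h x) (mul_le_mul_of_nonneg_left ?_ hc)
  exact le_ciSup (bddAbove_sum_abs L') x

lemma rowsum_le_matNormInf (M : Matrix {α // α ∈ A} {α // α ∈ A} ℝ) (β : {α // α ∈ A}) :
    ∑ γ : {α // α ∈ A}, |M β γ| ≤ matNormInf M := by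
  unfold matNormInf
  exact le_ciSup
    (Set.Finite.bddAbove (Set.finite_range fun α : {α // α ∈ A} => ∑ γ : {α // α ∈ A}, |M α γ|)) β

lemma matNormInf_nonneg (M : Matrix {α // α ∈ A} {α // α ∈ A} ℝ) : 0 ≤ matNormInf M := by
  rcases isEmpty_or_nonempty {α // α ∈ A} with h | h
  · unfold matNormInf
    rw [Real.iSup_of_isEmpty]
  · obtain ⟨β⟩ := h
    exact le_trans (Finset.sum_nonneg fun γ _ => abs_nonneg _) (rowsum_le_matNormInf M β)

end AuxLemmas

/-- Let `P̄_A ⊆ Ω` be unisolvent scattered nodes, `L_α` the Lagrange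
polynomials of the generated nodes `P_A ⊆ Ω`, `L̄_α` those of `P̄_A`, and
`S_A = R_A⁻¹` with `R_A = (L_β(p̄_α))`. Then `Λ(P̄_A) ≤ ‖S_A‖_∞ Λ(P_A)` and
`Λ(P_A) ≤ ‖S_A⁻¹‖_∞ Λ(P̄_A)`. -/
theorem lebesgue_comparison (m : ℕ) (A : Finset (Fin m → ℕ))
    (hA : CompleteIdx A) (p : Fin m → ℕ → ℝ) (hp : GenDistinct A p)
    (hpOmega : ∀ i : Fin m, ∀ j ≤ A.sup (fun α => α i), |p i j| ≤ 1)
    -- the Lagrange polynomials of `P_A`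
    (L : {α // α ∈ A} → MvPolynomial (Fin m) ℝ)
    (hLmem : ∀ α, L α ∈ PiA m A)
    (hLdelta : ∀ α β : {α // α ∈ A}, eval (node p ↑β) (L α) = if α = β then 1 else 0)
    -- the scattered unisolvent nodes `P̄_A ⊆ Ω`
    (pbar : {α // α ∈ A} → (Fin m → ℝ)) (hpbarinj : Function.Injective pbar)
    (hpbarOmega : ∀ α, pbar α ∈ Omega m)
    (huni : Unisolvent (Set.range pbar) (PiA m A))
    -- the Lagrange polynomials of `P̄_A`
    (Lbar : {α // α ∈ A} → MvPolynomial (Fin m) ℝ)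
    (hLbarmem : ∀ α, Lbar α ∈ PiA m A)
    (hLbardelta : ∀ α β : {α // α ∈ A}, eval (pbar β) (Lbar α) = if α = β then 1 else 0)
    -- `S_A` is the inverse of `R_A = (L_β(p̄_α))`
    (S : Matrix {α // α ∈ A} {α // α ∈ A} ℝ)
    (hS₁ : S * Matrix.of (fun α β : {α // α ∈ A} => eval (pbar α) (L β)) = 1)
    (hS₂ : Matrix.of (fun α β : {α // α ∈ A} => eval (pbar α) (L β)) * S = 1) :
    lebesgueFn m A Lbar ≤ matNormInf S * lebesgueFn m A L ∧
    lebesgueFn m A L ≤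
      matNormInf (Matrix.of fun α β : {α // α ∈ A} => eval (pbar α) (L β))
        * lebesgueFn m A Lbar := by
  classical
  set R : Matrix {α // α ∈ A} {α // α ∈ A} ℝ
    := Matrix.of (fun α β : {α // α ∈ A} => eval (pbar α) (L β)) with hR
  -- injectivity of evaluation at the generated nodes
  have hgen : ∀ Q ∈ PiA m A, (∀ α : {α // α ∈ A}, eval (node p ↑α) Q = 0) → Q = 0 :=
    gen_inj_aux (fun α : {α // α ∈ A} => node p ↑α) L hLmem hLdelta
  -- injectivity of evaluation at the scattered nodes
  have huni' : ∀ Q ∈ PiA m A, (∀ α : {α // α ∈ A}, eval (pbar α) Q = 0) → Q = 0 := by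
    intro Q hQ h0
    refine huni Q hQ ?_
    rintro x ⟨α, rfl⟩
    exact h0 α
  -- representation of L in the Lbar basis
  have reprL : ∀ γ : {α // α ∈ A}, L γ = ∑ β : {α // α ∈ A}, (eval (pbar β) (L γ)) • Lbar β :=
    fun γ => repr_eq_aux pbar Lbar hLbarmem hLbardelta huni' _ (hLmem γ)
  -- the coefficient matrix of Lbar in the L basis equals S
  set T : Matrix {α // α ∈ A} {α // α ∈ A} ℝ
    := Matrix.of (fun β α : {α // α ∈ A} => eval (node p ↑β) (Lbar α)) with hTdef
  have hTR : T * R = 1 := by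
    ext δ γ
    have h1 : eval (node p ↑δ) (L γ)
        = ∑ β : {α // α ∈ A}, (eval (pbar β) (L γ)) * eval (node p ↑δ) (Lbar β) := by
      conv_lhs => rw [reprL γ]
      rw [map_sum]
      exact Finset.sum_congr rfl fun β _ => smul_eval _ _ _
    have h2 : (T * R) δ γ
        = ∑ β : {α // α ∈ A}, eval (node p ↑δ) (Lbar β) * eval (pbar β) (L γ) := by
      simp [Matrix.mul_apply, hTdef, hR]
    rw [h2, Matrix.one_apply,
      Finset.sum_congr rfl fun β _ =>
        mul_comm (eval (node p ↑δ) (Lbar β)) (eval (pbar β) (L γ)),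
      ← h1, hLdelta]
    by_cases h : γ = δ
    · simp [h]
    · rw [if_neg h, if_neg (fun hh => h hh.symm)]
  have hT : T = S := by
    calc T = T * (R * S) := by rw [hS₂, mul_one]
      _ = (T * R) * S := by rw [mul_assoc]
      _ = S := by rw [hTR, one_mul]
  have hTS : ∀ α β : {α // α ∈ A}, eval (node p ↑β) (Lbar α) = S β α := by
    intro α β
    rw [← hT, hTdef]
    rfl
  -- representation of Lbar in the L basis
  have reprLbar : ∀ α : {α // α ∈ A}, Lbar α = ∑ β : {α // α ∈ A}, S β α • L β := by
    intro α
    rw [repr_eq_aux (fun α : {α // α ∈ A} => node p ↑α) L hLmem hLdelta hgen _ (hLbarmem α)]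
    exact Finset.sum_congr rfl fun β _ => by rw [hTS]
  have hattach : (A.attach : Finset {α // α ∈ A}) = Finset.univ := Finset.attach_eq_univ
  constructor
  · -- Λ(Lbar) ≤ ‖S‖ Λ(L)
    refine sup_le_mul_sup Lbar L (matNormInf S) (matNormInf_nonneg S) fun x => ?_
    rw [hattach]
    calc ∑ α : {α // α ∈ A}, |eval (↑x) (Lbar α)|
        ≤ ∑ α : {α // α ∈ A}, ∑ β : {α // α ∈ A}, |S β α| * |eval (↑x) (L β)| := by
          refine Finset.sum_le_sum fun α _ => ?_
          rw [reprLbar α, map_sum]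
          refine le_trans (Finset.abs_sum_le_sum_abs _ _) ?_
          refine le_of_eq (Finset.sum_congr rfl fun β _ => ?_)
          rw [smul_eval, abs_mul]
      _ = ∑ β : {α // α ∈ A}, (∑ α : {α // α ∈ A}, |S β α|) * |eval (↑x) (L β)| := by
          rw [Finset.sum_comm]
          exact Finset.sum_congr rfl fun β _ => (Finset.sum_mul _ _ _).symm
      _ ≤ ∑ β : {α // α ∈ A}, matNormInf S * |eval (↑x) (L β)| :=
          Finset.sum_le_sum fun β _ =>
            mul_le_mul_of_nonneg_right (rowsum_le_matNormInf S β) (abs_nonneg _)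
      _ = matNormInf S * ∑ β : {α // α ∈ A}, |eval (↑x) (L β)| := by rw [Finset.mul_sum]
  · -- Λ(L) ≤ ‖R‖ Λ(Lbar)
    refine sup_le_mul_sup L Lbar (matNormInf R) (matNormInf_nonneg R) fun x => ?_
    rw [hattach]
    calc ∑ γ : {α // α ∈ A}, |eval (↑x) (L γ)|
        ≤ ∑ γ : {α // α ∈ A}, ∑ β : {α // α ∈ A}, |R β γ| * |eval (↑x) (Lbar β)| := by
          refine Finset.sum_le_sum fun γ _ => ?_
          rw [reprL γ, map_sum]
          refine le_trans (Finset.abs_sum_le_sum_abs _ _) ?_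
          refine le_of_eq (Finset.sum_congr rfl fun β _ => ?_)
          rw [smul_eval, abs_mul, hR]
          rfl
      _ = ∑ β : {α // α ∈ A}, (∑ γ : {α // α ∈ A}, |R β γ|) * |eval (↑x) (Lbar β)| := by
          rw [Finset.sum_comm]
          exact Finset.sum_congr rfl fun β _ => (Finset.sum_mul _ _ _).symm
      _ ≤ ∑ β : {α // α ∈ A}, matNormInf R * |eval (↑x) (Lbar β)| :=
          Finset.sum_le_sum fun β _ =>
            mul_le_mul_of_nonneg_right (rowsum_le_matNormInf R β) (abs_nonneg _)
      _ = matNormInf R * ∑ β : {α // α ∈ A}, |eval (↑x) (Lbar β)| := by rw [Finset.mul_sum]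

end
end
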